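/- arXiv:0911.3202 — 11 statements merged into one kernel-verified Lean document; each statement's English description precedes it below -/
import Mathlib

section
/- Let U, Ũ : ℝ → Matrix n n ℂ satisfy the Schrödinger equations U′(t) = −i H(t) U(t) and Ũ′(t) = −i H̃(t) Ũ(t), where H, H̃ : ℝ → Matrix n n ℂ are continuous and H(t), H̃(t) are Hermitian for every t, and suppose U(t₀) = Ũ(t₀) is unitary. Then for every t ≥ t₀, ‖Ũ(t) − U(t)‖ ≤ ∫_{t₀}^{t} ‖H̃(s) − H(s)‖ ds, where ‖·‖ denotes the operator norm. -/
/-!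
Along the two evolutions, `D s = U(s)⋆ Ũ(s)` satisfies `D' = -i U⋆ (H̃ - H) Ũ` because `H` is
self-adjoint, and `D t₀ = 1`. Both evolutions stay unitary (`U⋆ U` has derivative zero), so
`‖D'(s)‖ = ‖H̃ s - H s‖` and `‖Ũ t - U t‖ = ‖U t (D t - 1)‖ = ‖D t - 1‖ = ‖∫ D'‖`.
-/

open scoped Matrix.Norms.L2Operator

section Schrodinger

variable {A : Type*} [CStarAlgebra A]

theorem hasDerivAt_star_mul_of_schrodinger {H K U V : ℝ → A} {t : ℝ}
    (hH : IsSelfAdjoint (H t)) (hU : HasDerivAt U (-Complex.I • (H t * U t)) t)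
    (hV : HasDerivAt V (-Complex.I • (K t * V t)) t) :
    HasDerivAt (fun s ↦ star (U s) * V s)
      (-Complex.I • (star (U t) * ((K t - H t) * V t))) t := by
  refine (hU.star.mul hV).congr_deriv ?_
  rw [star_smul, star_mul, hH.star_eq]
  simp only [star_neg, Complex.star_def, Complex.conj_I, neg_neg, smul_mul_assoc, mul_smul_comm,
    mul_sub, sub_mul, smul_sub, mul_assoc]
  module

theorem star_mul_self_eq_of_schrodinger {H U : ℝ → A} (hH : ∀ t, IsSelfAdjoint (H t))
    (hU : ∀ t, HasDerivAt U (-Complex.I • (H t * U t)) t) (s t : ℝ) :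
    star (U s) * U s = star (U t) * U t := by
  have hderiv : ∀ t, HasDerivAt (fun s ↦ star (U s) * U s) 0 t := fun t ↦ by
    simpa using hasDerivAt_star_mul_of_schrodinger (hH t) (hU t) (hU t)
  exact is_const_of_deriv_eq_zero (fun t ↦ (hderiv t).differentiableAt)
    (fun t ↦ (hderiv t).deriv) s t

theorem norm_sub_le_integral_of_schrodinger {H K U V : ℝ → A} {t₀ t : ℝ}
    (hHc : Continuous H) (hKc : Continuous K) (hH : ∀ t, IsSelfAdjoint (H t))
    (hU : ∀ t, HasDerivAt U (-Complex.I • (H t * U t)) t)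
    (hV : ∀ t, HasDerivAt V (-Complex.I • (K t * V t)) t)
    (hUu : ∀ t, U t ∈ unitary A) (hVu : ∀ t, V t ∈ unitary A) (hinit : V t₀ = U t₀)
    (ht : t₀ ≤ t) :
    ‖V t - U t‖ ≤ ∫ s in t₀..t, ‖K s - H s‖ := by
  set g : ℝ → A := fun s ↦ -Complex.I • (star (U s) * ((K s - H s) * V s))
  have hg_norm : ∀ s, ‖g s‖ = ‖K s - H s‖ := fun s ↦ by
    rw [norm_smul, norm_neg, Complex.norm_I, one_mul,
      CStarRing.norm_mem_unitary_mul _ (Unitary.star_mem (hUu s)),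
      CStarRing.norm_mul_mem_unitary _ (hVu s)]
  have hUc : Continuous U := continuous_iff_continuousAt.2 fun s ↦ (hU s).continuousAt
  have hVc : Continuous V := continuous_iff_continuousAt.2 fun s ↦ (hV s).continuousAt
  have hg_cont : Continuous g := (hUc.star.mul ((hKc.sub hHc).mul hVc)).const_smul _
  have hftc : ∫ s in t₀..t, g s = star (U t) * V t - 1 := by
    rw [intervalIntegral.integral_eq_sub_of_hasDerivAt
      (fun s _ ↦ hasDerivAt_star_mul_of_schrodinger (hH s) (hU s) (hV s))
      (hg_cont.intervalIntegrable t₀ t), hinit, Unitary.star_mul_self_of_mem (hUu t₀)]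
  calc ‖V t - U t‖ = ‖U t * (star (U t) * V t - 1)‖ := by
        rw [mul_sub, ← mul_assoc, Unitary.mul_star_self_of_mem (hUu t), one_mul, mul_one]
    _ = ‖∫ s in t₀..t, g s‖ := by rw [CStarRing.norm_mem_unitary_mul _ (hUu t), hftc]
    _ ≤ ∫ s in t₀..t, ‖g s‖ := intervalIntegral.norm_integral_le_integral_norm ht
    _ = ∫ s in t₀..t, ‖K s - H s‖ := by simp only [hg_norm]

end Schrodinger

/-- In finite dimension `U⋆ U = 1` already makes `U` unitary, so conservation of `U⋆ U` suffices;
in a general C⋆-algebra the evolution need only preserve isometries. -/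
theorem Matrix.mem_unitaryGroup_of_schrodinger {ι : Type*} [Fintype ι] [DecidableEq ι]
    {H U : ℝ → Matrix ι ι ℂ} (hH : ∀ t, (H t).IsHermitian)
    (hU : ∀ t, HasDerivAt U (-Complex.I • (H t * U t)) t) {t₀ : ℝ}
    (h₀ : U t₀ ∈ Matrix.unitaryGroup ι ℂ) (t : ℝ) : U t ∈ Matrix.unitaryGroup ι ℂ := by
  rw [Matrix.mem_unitaryGroup_iff',
    star_mul_self_eq_of_schrodinger (fun s ↦ (hH s).isSelfAdjoint) hU t t₀]
  exact Matrix.mem_unitaryGroup_iff'.1 h₀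

/-- If `U` and `Ũ` solve the Schrödinger equations `U' = -i H U`, `Ũ' = -i H̃ Ũ`
with continuous Hermitian Hamiltonians and the same unitary initial condition at `t₀`, then for
`t ≥ t₀` we have `‖Ũ t - U t‖ ≤ ∫_{t₀}^t ‖H̃ s - H s‖ ds` in the operator norm. -/
theorem error_estimate_time_evolution {n : ℕ}
    (H Ht U Ut : ℝ → Matrix (Fin n) (Fin n) ℂ) (t₀ : ℝ)
    (hHcont : Continuous H) (hHtcont : Continuous Ht)
    (hHherm : ∀ t, (H t).IsHermitian) (hHtherm : ∀ t, (Ht t).IsHermitian)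
    (hU : ∀ t, HasDerivAt U ((-Complex.I) • (H t * U t)) t)
    (hUt : ∀ t, HasDerivAt Ut ((-Complex.I) • (Ht t * Ut t)) t)
    (hinit : Ut t₀ = U t₀)
    (hunitary : U t₀ ∈ Matrix.unitaryGroup (Fin n) ℂ)
    (t : ℝ) (ht : t₀ ≤ t) :
    ‖Ut t - U t‖ ≤ ∫ s in t₀..t, ‖Ht s - H s‖ :=
  norm_sub_le_integral_of_schrodinger hHcont hHtcont (fun s ↦ (hHherm s).isSelfAdjoint) hU hUt
    (Matrix.mem_unitaryGroup_of_schrodinger hHherm hU hunitary)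
    (Matrix.mem_unitaryGroup_of_schrodinger hHtherm hUt (hinit ▸ hunitary)) hinit ht
end

section
/- Let A be a complex Banach algebra, let H_B ∈ A with ‖H_B‖ ≤ β, let H′ : [0,T] → A be continuous with ‖H′(t)‖ ≤ J for all t ∈ [0,T], where β, J ≥ 0 and T ≥ 0, and set H(t) := H_B + H′(t). Then the second-order Magnus term Ω₂(T) := −(1/2) ∫_0^T ∫_0^{s₁} [H(s₁), H(s₂)] ds₂ ds₁ satisfies ‖Ω₂(T)‖ ≤ (1/2) (β + J) J T² = (1/2)(JT)(εT), where ε := β + J. -/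
/-! Clamping `H'` to `[0, T]` gives a continuous `K` with `‖K‖ ≤ J` everywhere and `H = H_B + K`
on `[0, T]`. With `c = [H_B, K]` one has `[H s₁, H s₂] = (c s₂ - c s₁) + [K s₁, K s₂]`. The
antisymmetric part integrates over the triangle to `∫₀ᵀ (T - 2s) c(s) ds` (Cauchy's formula for
repeated integrals), of norm at most `2βJ ∫₀ᵀ |T - 2s| ds = βJT²`; a pointwise bound would lose a
factor `2` here. The term `[K s₁, K s₂]` is bounded by `2J²` pointwise, contributing `J²T²`. -/

open intervalIntegral MeasureTheory

namespace intervalIntegral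

variable {E : Type*} [NormedAddCommGroup E] [NormedSpace ℝ E]

theorem integral_integral_eq_integral_sub_smul [CompleteSpace E] {f : ℝ → E}
    (hf : Continuous f) (a b : ℝ) : ∫ s in a..b, ∫ u in a..s, f u = ∫ s in a..b, (b - s) • f s := by
  have parts := integral_smul_deriv_eq_deriv_smul (a := a) (b := b) (u := fun s => s - b)
    (u' := fun _ => (1 : ℝ)) (v := fun s => ∫ u in a..s, f u) (v' := f)
    (fun s _ => (hasDerivAt_id s).sub_const b)
    (fun s _ => (hf.integral_hasStrictDerivAt a s).hasDerivAt)
    intervalIntegrable_const (hf.intervalIntegrable a b)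
  simp only [sub_self, zero_smul, integral_same, smul_zero, one_smul, zero_sub] at parts
  rw [← neg_neg (∫ s in a..b, ∫ u in a..s, f u), ← parts, ← integral_neg]
  simp only [← neg_smul, neg_sub]

theorem integral_integral_sub_eq_integral_smul [CompleteSpace E] {f : ℝ → E}
    (hf : Continuous f) (a b : ℝ) :
    ∫ s in a..b, ∫ u in a..s, (f u - f s) = ∫ s in a..b, (a + b - 2 * s) • f s := by
  have inner : ∀ s, ∫ u in a..s, (f u - f s) = (∫ u in a..s, f u) - (s - a) • f s := fun s => by
    rw [integral_sub (hf.intervalIntegrable a s) intervalIntegrable_const, integral_const]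
  have hprim : Continuous fun s => ∫ u in a..s, f u :=
    continuous_primitive (fun _ _ => hf.intervalIntegrable _ _) a
  simp only [inner]
  rw [integral_sub (hprim.intervalIntegrable a b)
      (Continuous.intervalIntegrable (by fun_prop) _ _),
    integral_integral_eq_integral_sub_smul hf,
    ← integral_sub (Continuous.intervalIntegrable (by fun_prop) _ _)
      (Continuous.intervalIntegrable (by fun_prop) _ _)]
  congr 1 with s
  module

theorem integral_abs_add_sub_two_mul {a b : ℝ} (hab : a ≤ b) :
    ∫ s in a..b, |a + b - 2 * s| = (b - a) ^ 2 / 2 := by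
  have left : ∫ s in a..(a + b) / 2, |a + b - 2 * s| = ∫ s in a..(a + b) / 2, (a + b - 2 * s) :=
    integral_congr fun s hs => by
      rw [Set.uIcc_of_le (by linarith)] at hs
      exact abs_of_nonneg (by linarith [hs.2])
  have right : ∫ s in (a + b) / 2..b, |a + b - 2 * s| = ∫ s in (a + b) / 2..b, -(a + b - 2 * s) :=
    integral_congr fun s hs => by
      rw [Set.uIcc_of_le (by linarith)] at hs
      exact abs_of_nonpos (by linarith [hs.1])
  rw [← integral_add_adjacent_intervals (b := (a + b) / 2)
      (Continuous.intervalIntegrable (by fun_prop) _ _)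
      (Continuous.intervalIntegrable (by fun_prop) _ _), left, right, integral_neg,
    integral_sub intervalIntegrable_const (Continuous.intervalIntegrable (by fun_prop) _ _),
    integral_sub intervalIntegrable_const (Continuous.intervalIntegrable (by fun_prop) _ _),
    integral_const, integral_const, integral_const_mul, integral_const_mul, integral_id,
    integral_id, smul_eq_mul, smul_eq_mul]
  ring

theorem norm_integral_add_sub_two_mul_smul_le {f : ℝ → E} {a b C : ℝ}
    (hab : a ≤ b) (hf : ∀ s, ‖f s‖ ≤ C) :
    ‖∫ s in a..b, (a + b - 2 * s) • f s‖ ≤ C * (b - a) ^ 2 / 2 := by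
  calc ‖∫ s in a..b, (a + b - 2 * s) • f s‖ ≤ ∫ s in a..b, |a + b - 2 * s| * C :=
        norm_integral_le_of_norm_le hab (ae_of_all _ fun s _ => by
          rw [norm_smul, Real.norm_eq_abs]
          exact mul_le_mul_of_nonneg_left (hf s) (abs_nonneg _))
          (Continuous.intervalIntegrable (by fun_prop) _ _)
    _ = C * (b - a) ^ 2 / 2 := by
        rw [integral_mul_const, integral_abs_add_sub_two_mul hab]
        ring

theorem norm_integral_integral_le_of_norm_le_const {F : ℝ → ℝ → E} {T C : ℝ}
    (hT : 0 ≤ T) (hF : ∀ s u, ‖F s u‖ ≤ C) :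
    ‖∫ s in 0..T, ∫ u in 0..s, F s u‖ ≤ C * T ^ 2 / 2 := by
  calc ‖∫ s in 0..T, ∫ u in 0..s, F s u‖ ≤ ∫ s in 0..T, C * s :=
        norm_integral_le_of_norm_le hT (ae_of_all _ fun s hs => by
          simpa [abs_of_pos hs.1] using
            norm_integral_le_of_norm_le_const (a := 0) (b := s) fun u _ => hF s u)
          (Continuous.intervalIntegrable (by fun_prop) _ _)
    _ = C * T ^ 2 / 2 := by
        rw [integral_const_mul, integral_id]
        ring

end intervalIntegral

section Commutator

variable {A : Type*} [NormedRing A]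

theorem norm_mul_sub_mul_le_of_le {a b : A} {α β : ℝ} (ha : ‖a‖ ≤ α) (hb : ‖b‖ ≤ β) :
    ‖a * b - b * a‖ ≤ 2 * α * β := by
  have hα : 0 ≤ α := (norm_nonneg a).trans ha
  have hβ : 0 ≤ β := (norm_nonneg b).trans hb
  calc ‖a * b - b * a‖ ≤ ‖a‖ * ‖b‖ + ‖b‖ * ‖a‖ :=
        (norm_sub_le _ _).trans (add_le_add (norm_mul_le _ _) (norm_mul_le _ _))
    _ ≤ α * β + β * α := by gcongr
    _ = 2 * α * β := by ring

theorem norm_integral_integral_commutator_le [NormedSpace ℝ A] [CompleteSpace A] {b : A}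
    {K : ℝ → A} {β J T : ℝ} (hK : Continuous K) (hb : ‖b‖ ≤ β) (hKJ : ∀ t, ‖K t‖ ≤ J)
    (hT : 0 ≤ T) :
    ‖∫ s in 0..T, ∫ u in 0..s, ((b + K s) * (b + K u) - (b + K u) * (b + K s))‖ ≤
      (β + J) * J * T ^ 2 := by
  set c : ℝ → A := fun t => b * K t - K t * b
  have hc : Continuous c := by fun_prop
  have split : ∀ s, ∫ u in 0..s, ((b + K s) * (b + K u) - (b + K u) * (b + K s)) =
      (∫ u in 0..s, (c u - c s)) + ∫ u in 0..s, (K s * K u - K u * K s) := fun s => by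
    rw [← integral_add (Continuous.intervalIntegrable (by fun_prop) _ _)
      (Continuous.intervalIntegrable (by fun_prop) _ _)]
    congr 1 with u
    simp only [c]
    noncomm_ring
  rw [integral_congr fun s _ => split s, integral_add
    (Continuous.intervalIntegrable (by fun_prop) _ _)
    (Continuous.intervalIntegrable (by fun_prop) _ _),
    integral_integral_sub_eq_integral_smul hc]
  calc _ ≤ ‖∫ s in 0..T, (0 + T - 2 * s) • c s‖ +
        ‖∫ s in 0..T, ∫ u in 0..s, (K s * K u - K u * K s)‖ := norm_add_le _ _
    _ ≤ 2 * β * J * (T - 0) ^ 2 / 2 + 2 * J * J * T ^ 2 / 2 :=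
        add_le_add
          (norm_integral_add_sub_two_mul_smul_le hT fun t => norm_mul_sub_mul_le_of_le hb (hKJ t))
          (norm_integral_integral_le_of_norm_le_const hT fun s u =>
            norm_mul_sub_mul_le_of_le (hKJ s) (hKJ u))
    _ = (β + J) * J * T ^ 2 := by ring

end Commutator

theorem magnus_second_order_bound_general
    {A : Type*} [NormedRing A] [NormedAlgebra ℂ A] [CompleteSpace A]
    (T β J : ℝ) (hT : 0 ≤ T)
    (H_B : A) (hHB : ‖H_B‖ ≤ β)
    (H' : ℝ → A) (hcont : ContinuousOn H' (Set.Icc 0 T))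
    (hbound : ∀ t ∈ Set.Icc (0:ℝ) T, ‖H' t‖ ≤ J)
    (H : ℝ → A) (hH : ∀ t, H t = H_B + H' t) :
    ‖(-(1/2 : ℝ)) • ∫ s₁ in (0:ℝ)..T, ∫ s₂ in (0:ℝ)..s₁,
        (H s₁ * H s₂ - H s₂ * H s₁)‖
      ≤ (1/2) * (β + J) * J * T^2 := by
  set K : ℝ → A := fun t => H' (Set.projIcc 0 T hT t)
  have hK : Continuous K :=
    hcont.comp_continuous (continuous_subtype_val.comp continuous_projIcc) fun t => Subtype.prop _
  have hHK : ∀ t ∈ Set.Icc 0 T, H t = H_B + K t := fun t ht => by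
    simp only [K, hH, Set.projIcc_of_mem hT ht]
  have on_triangle : ∫ s₁ in (0:ℝ)..T, ∫ s₂ in (0:ℝ)..s₁, (H s₁ * H s₂ - H s₂ * H s₁) =
      ∫ s₁ in (0:ℝ)..T, ∫ s₂ in (0:ℝ)..s₁,
        ((H_B + K s₁) * (H_B + K s₂) - (H_B + K s₂) * (H_B + K s₁)) := by
    refine integral_congr fun s₁ hs₁ => integral_congr fun s₂ hs₂ => ?_
    rw [Set.uIcc_of_le hT] at hs₁
    rw [Set.uIcc_of_le hs₁.1] at hs₂
    rw [hHK s₁ hs₁, hHK s₂ ⟨hs₂.1, hs₂.2.trans hs₁.2⟩]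
  rw [norm_smul, on_triangle, norm_neg, Real.norm_of_nonneg (by norm_num), mul_assoc (1 / 2),
    mul_assoc (1 / 2)]
  exact mul_le_mul_of_nonneg_left (norm_integral_integral_commutator_le hK hHB
    (fun t => hbound _ (Subtype.prop _)) hT) (by norm_num)

/-- Bound on the second-order Magnus term.  With `H t = H_B + H' t`, `‖H_B‖ ≤ β`,
`‖H' t‖ ≤ J` on `[0,T]`, the term
`Ω₂(T) = -(1/2) ∫_0^T ∫_0^{s₁} [H(s₁), H(s₂)] ds₂ ds₁` satisfies
`‖Ω₂(T)‖ ≤ (1/2)(β+J) J T²`. -/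
theorem magnus_second_order_bound
    {A : Type*} [NormedRing A] [NormedAlgebra ℂ A] [CompleteSpace A]
    (T β J : ℝ) (hT : 0 ≤ T) (hβ : 0 ≤ β) (hJ : 0 ≤ J)
    (H_B : A) (hHB : ‖H_B‖ ≤ β)
    (H' : ℝ → A) (hcont : ContinuousOn H' (Set.Icc 0 T))
    (hbound : ∀ t ∈ Set.Icc (0:ℝ) T, ‖H' t‖ ≤ J)
    (H : ℝ → A) (hH : ∀ t, H t = H_B + H' t) :
    ‖(-(1/2 : ℝ)) • ∫ s₁ in (0:ℝ)..T, ∫ s₂ in (0:ℝ)..s₁,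
        (H s₁ * H s₂ - H s₂ * H s₁)‖
      ≤ (1/2) * (β + J) * J * T^2 :=
  magnus_second_order_bound_general T β J hT H_B hHB H' hcont hbound H hH
end

section
/- Let A be a complex Banach algebra, let H_B ∈ A, let H′ : [0,T] → A be continuous with ‖H′(t)‖ ≤ J for all t, set H(t) := H_B + H′(t) and assume ‖H(t)‖ ≤ ε for all t ∈ [0,T]. Let Δ ⊆ [0,T] be a measurable set of Lebesgue measure δ ≤ T that is invariant under the reflection t ↦ T − t, and suppose the time-symmetry H(T − t) = H(t) holds for all t ∈ [0,T] \ Δ. Then the second-order Magnus term Ω₂(T) := −(1/2) ∫_0^T ∫_0^{s₁} [H(s₁), H(s₂)] ds₂ ds₁ satisfies ‖Ω₂(T)‖ ≤ 2 J ε (δT − δ²/2) = 2 (δ/T)(1 − δ/(2T)) (JT)(εT). -/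
/-!
Write `I = ∫₀ᵀ [H t, Φ t]` with `Φ t = ∫₀ᵗ H` for the double integral. The substitution
`t ↦ T - t` shows that the reversed Hamiltonian `G t = H (T - t)`, with primitive `Ψ`, has
commutator integral `-I`, so `2I = ∫₀ᵀ ([H, Φ] - [G, Ψ])` only sees the defect `H - G`, which
vanishes off `Δ` and has norm at most `2J` on `Δ`. Pointwise
`‖[H, Φ] - [G, Ψ]‖(t) ≤ 2ε (t ‖H - G‖(t) + ∫₀ᵗ ‖H - G‖)`, and the right-hand side integrates to
`2εT ∫₀ᵀ ‖H - G‖ ≤ 4JεδT`. Hence `‖Ω₂(T)‖ ≤ JεδT`, which is at most `2Jε(δT - δ²/2)` as `δ ≤ T`.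
-/

open MeasureTheory Set

section

variable {A : Type*} [NormedRing A]

lemma norm_lie_le (a b : A) : ‖⁅a, b⁆‖ ≤ 2 * ‖a‖ * ‖b‖ :=
  calc ‖a * b - b * a‖ ≤ ‖a‖ * ‖b‖ + ‖b‖ * ‖a‖ :=
        (norm_sub_le _ _).trans (add_le_add (norm_mul_le _ _) (norm_mul_le _ _))
    _ = 2 * ‖a‖ * ‖b‖ := by ring

lemma norm_lie_sub_lie_le (a b x y : A) :
    ‖⁅a, x⁆ - ⁅b, y⁆‖ ≤ 2 * ‖a - b‖ * ‖x‖ + 2 * ‖b‖ * ‖x - y‖ := by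
  have : ⁅a, x⁆ - ⁅b, y⁆ = ⁅a - b, x⁆ + ⁅b, x - y⁆ := by simp only [Ring.lie_def]; noncomm_ring
  rw [this]
  exact (norm_add_le _ _).trans (add_le_add (norm_lie_le _ _) (norm_lie_le _ _))

lemma ContinuousOn.lie {X : Type*} [TopologicalSpace X] {f g : X → A} {s : Set X}
    (hf : ContinuousOn f s) (hg : ContinuousOn g s) : ContinuousOn (fun x => ⁅f x, g x⁆) s :=
  (hf.mul hg).sub (hg.mul hf)

end

lemma continuousOn_primitive_Icc {E : Type*} [NormedAddCommGroup E] [NormedSpace ℝ E]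
    {f : ℝ → E} {a b : ℝ} (hab : a ≤ b) (hf : ContinuousOn f (Icc a b)) :
    ContinuousOn (fun t => ∫ s in a..t, f s) (Icc a b) := by
  rw [← uIcc_of_le hab] at hf ⊢
  exact intervalIntegral.continuousOn_primitive_interval hf.integrableOn_uIcc

lemma integral_mul_add_primitive_eq_mul_integral {f : ℝ → ℝ} {a b : ℝ} (hab : a ≤ b)
    (hf : ContinuousOn f (Icc a b)) :
    ∫ t in a..b, (t * f t + ∫ s in a..t, f s) = b * ∫ s in a..b, f s := by
  have hN := continuousOn_primitive_Icc hab hf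
  have hderiv : ∀ t ∈ Ioo a b,
      HasDerivAt (fun t => t * ∫ s in a..t, f s) (t * f t + ∫ s in a..t, f s) t := by
    intro t ht
    have hN' : HasDerivAt (fun t => ∫ s in a..t, f s) (f t) t :=
      intervalIntegral.integral_hasDerivAt_right
        ((hf.mono (Icc_subset_Icc_right ht.2.le)).intervalIntegrable_of_Icc ht.1.le)
        ((hf.mono Ioo_subset_Icc_self).stronglyMeasurableAtFilter isOpen_Ioo t ht)
        (hf.continuousAt (Icc_mem_nhds ht.1 ht.2))
    exact ((hasDerivAt_id' t).mul hN').congr_deriv (by ring)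
  have hint : IntervalIntegrable (fun t => t * f t + ∫ s in a..t, f s) volume a b :=
    ((continuousOn_id.mul hf).add hN).intervalIntegrable_of_Icc hab
  rw [intervalIntegral.integral_eq_sub_of_hasDerivAt_of_le hab (continuousOn_id.mul hN) hderiv hint]
  simp

lemma integral_le_mul_measureReal_of_le_indicator {f : ℝ → ℝ} {a b C : ℝ} {s : Set ℝ}
    (hab : a ≤ b) (hf : IntervalIntegrable f volume a b) (hC : 0 ≤ C) (hs : volume s ≠ ⊤)
    (hfs : ∀ t ∈ Icc a b, f t ≤ s.indicator (fun _ => C) t) :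
    ∫ t in a..b, f t ≤ C * volume.real s := by
  set S := toMeasurable volume s
  have hS : MeasurableSet S := measurableSet_toMeasurable _ _
  have hSs : volume S = volume s := measure_toMeasurable s
  calc ∫ t in a..b, f t ≤ ∫ t in a..b, S.indicator (fun _ => C) t := by
        refine intervalIntegral.integral_mono_on hab hf ?_ fun t ht => (hfs t ht).trans ?_
        · exact (continuous_const.integrableOn_uIcc.indicator hS).intervalIntegrable
        · exact indicator_le_indicator_of_subset (subset_toMeasurable _ _) (fun _ => hC) t
    _ = C * volume.real (Ioc a b ∩ S) := by
        rw [intervalIntegral.integral_of_le hab, setIntegral_indicator hS, setIntegral_const,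
          smul_eq_mul, mul_comm]
    _ ≤ C * volume.real S := by
        gcongr
        · rwa [hSs]
        · exact inter_subset_right
    _ = C * volume.real s := by rw [measureReal_def, hSs, measureReal_def]

section

variable {A : Type*} [NormedRing A] [NormedAlgebra ℝ A]

lemma norm_integral_lie_primitive_sub_le {H G : ℝ → A} {T ε : ℝ} (hT : 0 ≤ T)
    (hH : ContinuousOn H (Icc 0 T)) (hG : ContinuousOn G (Icc 0 T))
    (hHε : ∀ t ∈ Icc 0 T, ‖H t‖ ≤ ε) (hGε : ∀ t ∈ Icc 0 T, ‖G t‖ ≤ ε) :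
    ‖(∫ t in (0:ℝ)..T, ⁅H t, ∫ s in (0:ℝ)..t, H s⁆) - ∫ t in (0:ℝ)..T, ⁅G t, ∫ s in (0:ℝ)..t, G s⁆‖
      ≤ 2 * ε * T * ∫ t in (0:ℝ)..T, ‖H t - G t‖ := by
  have hD : ContinuousOn (fun t => ‖H t - G t‖) (Icc 0 T) := (hH.sub hG).norm
  have hΦ := continuousOn_primitive_Icc hT hH
  have hΨ := continuousOn_primitive_Icc hT hG
  have hN := continuousOn_primitive_Icc hT hD
  have hpointwise : ∀ t ∈ Icc 0 T,
      ‖⁅H t, ∫ s in (0:ℝ)..t, H s⁆ - ⁅G t, ∫ s in (0:ℝ)..t, G s⁆‖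
        ≤ 2 * ε * (t * ‖H t - G t‖ + ∫ s in (0:ℝ)..t, ‖H s - G s‖) := by
    intro t ht
    have hsub : Icc 0 t ⊆ Icc 0 T := Icc_subset_Icc_right ht.2
    have hΦt : ‖∫ s in (0:ℝ)..t, H s‖ ≤ ε * t := by
      simpa [abs_of_nonneg ht.1] using intervalIntegral.norm_integral_le_of_norm_le_const
        fun s hs => hHε s (hsub (Ioc_subset_Icc_self (uIoc_of_le ht.1 ▸ hs)))
    have hΦΨt : ‖(∫ s in (0:ℝ)..t, H s) - ∫ s in (0:ℝ)..t, G s‖ ≤ ∫ s in (0:ℝ)..t, ‖H s - G s‖ := by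
      rw [← intervalIntegral.integral_sub ((hH.mono hsub).intervalIntegrable_of_Icc ht.1)
        ((hG.mono hsub).intervalIntegrable_of_Icc ht.1)]
      exact intervalIntegral.norm_integral_le_integral_norm ht.1
    have hε : 0 ≤ ε := (norm_nonneg _).trans (hGε t ht)
    calc _ ≤ 2 * ‖H t - G t‖ * ‖∫ s in (0:ℝ)..t, H s‖
          + 2 * ‖G t‖ * ‖(∫ s in (0:ℝ)..t, H s) - ∫ s in (0:ℝ)..t, G s‖ :=
          norm_lie_sub_lie_le _ _ _ _
      _ ≤ 2 * ‖H t - G t‖ * (ε * t) + 2 * ε * ∫ s in (0:ℝ)..t, ‖H s - G s‖ := by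
        gcongr
        exact hGε t ht
      _ = 2 * ε * (t * ‖H t - G t‖ + ∫ s in (0:ℝ)..t, ‖H s - G s‖) := by ring
  rw [← intervalIntegral.integral_sub ((hH.lie hΦ).intervalIntegrable_of_Icc hT)
    ((hG.lie hΨ).intervalIntegrable_of_Icc hT)]
  calc _ ≤ ∫ t in (0:ℝ)..T, ‖⁅H t, ∫ s in (0:ℝ)..t, H s⁆ - ⁅G t, ∫ s in (0:ℝ)..t, G s⁆‖ :=
        intervalIntegral.norm_integral_le_integral_norm hT
    _ ≤ ∫ t in (0:ℝ)..T, 2 * ε * (t * ‖H t - G t‖ + ∫ s in (0:ℝ)..t, ‖H s - G s‖) :=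
        intervalIntegral.integral_mono_on hT
          (((hH.lie hΦ).sub (hG.lie hΨ)).norm.intervalIntegrable_of_Icc hT)
          (((continuousOn_id.mul hD).add hN).const_smul (2 * ε) |>.intervalIntegrable_of_Icc hT)
          hpointwise
    _ = 2 * ε * T * ∫ t in (0:ℝ)..T, ‖H t - G t‖ := by
        rw [intervalIntegral.integral_const_mul, integral_mul_add_primitive_eq_mul_integral hT hD]
        ring

variable [CompleteSpace A]

lemma intervalIntegral.integral_const_lie {f : ℝ → A} {a b : ℝ} (c : A)
    (hf : IntervalIntegrable f volume a b) :
    ∫ x in a..b, ⁅c, f x⁆ = ⁅c, ∫ x in a..b, f x⁆ :=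
  (ContinuousLinearMap.mul ℝ A c - (ContinuousLinearMap.mul ℝ A).flip c).intervalIntegral_comp_comm
    hf

lemma intervalIntegral.integral_lie_const {f : ℝ → A} {a b : ℝ} (c : A)
    (hf : IntervalIntegrable f volume a b) :
    ∫ x in a..b, ⁅f x, c⁆ = ⁅∫ x in a..b, f x, c⁆ :=
  ((ContinuousLinearMap.mul ℝ A).flip c - ContinuousLinearMap.mul ℝ A c).intervalIntegral_comp_comm
    hf

lemma integral_integral_lie_eq_integral_lie_primitive {H : ℝ → A} {T : ℝ}
    (hH : ContinuousOn H (uIcc 0 T)) :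
    ∫ s₁ in (0:ℝ)..T, ∫ s₂ in (0:ℝ)..s₁, ⁅H s₁, H s₂⁆
      = ∫ t in (0:ℝ)..T, ⁅H t, ∫ s in (0:ℝ)..t, H s⁆ :=
  intervalIntegral.integral_congr fun _ ht =>
    intervalIntegral.integral_const_lie _ (hH.mono (uIcc_subset_uIcc_left ht)).intervalIntegrable

lemma integral_lie_primitive_comp_sub_left {H : ℝ → A} {T : ℝ}
    (hH : ContinuousOn H (uIcc 0 T)) :
    ∫ t in (0:ℝ)..T, ⁅H (T - t), ∫ s in (0:ℝ)..t, H (T - s)⁆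
      = -∫ t in (0:ℝ)..T, ⁅H t, ∫ s in (0:ℝ)..t, H s⁆ := by
  set Φ : ℝ → A := fun t => ∫ s in (0:ℝ)..t, H s
  have hint : ∀ t ∈ uIcc 0 T, IntervalIntegrable H volume 0 t := fun t ht =>
    (hH.mono (uIcc_subset_uIcc_left ht)).intervalIntegrable
  have hΦ : ContinuousOn Φ (uIcc 0 T) :=
    intervalIntegral.continuousOn_primitive_interval hH.integrableOn_uIcc
  have hreflect : ∀ t ∈ uIcc 0 T, T - t ∈ uIcc 0 T := by
    intro t ht
    rw [mem_uIcc] at ht ⊢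
    rcases ht with ⟨h₁, h₂⟩ | ⟨h₁, h₂⟩
    · exact Or.inl ⟨by linarith, by linarith⟩
    · exact Or.inr ⟨by linarith, by linarith⟩
  calc ∫ t in (0:ℝ)..T, ⁅H (T - t), ∫ s in (0:ℝ)..t, H (T - s)⁆
      = ∫ t in (0:ℝ)..T, ⁅H (T - t), Φ T - Φ (T - t)⁆ := by
        refine intervalIntegral.integral_congr fun t ht => ?_
        simp only [Φ, intervalIntegral.integral_comp_sub_left H, sub_zero,
          intervalIntegral.integral_interval_sub_left (hint T right_mem_uIcc)
            (hint _ (hreflect t ht))]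
    _ = ∫ t in (0:ℝ)..T, ⁅H t, Φ T - Φ t⁆ := by
        simpa using
          intervalIntegral.integral_comp_sub_left (fun t => ⁅H t, Φ T - Φ t⁆) T (a := 0) (b := T)
    _ = ∫ t in (0:ℝ)..T, (⁅H t, Φ T⁆ - ⁅H t, Φ t⁆) := by
        simp only [Ring.lie_def, mul_sub, sub_mul, sub_sub_sub_comm]
    _ = ⁅Φ T, Φ T⁆ - ∫ t in (0:ℝ)..T, ⁅H t, Φ t⁆ := by
        rw [intervalIntegral.integral_sub (hH.lie continuousOn_const).intervalIntegrable
          (hH.lie hΦ).intervalIntegrable,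
          intervalIntegral.integral_lie_const _ (hint T right_mem_uIcc)]
    _ = -∫ t in (0:ℝ)..T, ⁅H t, Φ t⁆ := by rw [Ring.lie_def, sub_self, zero_sub]

lemma norm_integral_lie_primitive_le {H : ℝ → A} {T ε : ℝ} (hT : 0 ≤ T)
    (hH : ContinuousOn H (Icc 0 T)) (hHε : ∀ t ∈ Icc 0 T, ‖H t‖ ≤ ε) :
    ‖∫ t in (0:ℝ)..T, ⁅H t, ∫ s in (0:ℝ)..t, H s⁆‖
      ≤ ε * T * ∫ t in (0:ℝ)..T, ‖H t - H (T - t)‖ := by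
  have hreflect : MapsTo (fun t => T - t) (Icc 0 T) (Icc 0 T) := fun t ht =>
    ⟨by linarith [ht.2], by linarith [ht.1]⟩
  have h := norm_integral_lie_primitive_sub_le (G := fun t => H (T - t)) hT hH
    (hH.comp (continuousOn_const.sub continuousOn_id) hreflect) hHε fun t ht => hHε _ (hreflect ht)
  rw [integral_lie_primitive_comp_sub_left (uIcc_of_le hT ▸ hH), sub_neg_eq_add, ← two_smul ℝ,
    norm_smul, Real.norm_two] at h
  linarith

end

theorem magnus_second_order_time_symmetric_bound_general
    {A : Type*} [NormedRing A] [NormedAlgebra ℂ A] [CompleteSpace A]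
    (T J ε δ : ℝ) (hT : 0 ≤ T)
    (H_B : A) (H' : ℝ → A) (hcont : ContinuousOn H' (Set.Icc 0 T))
    (H : ℝ → A) (hH : ∀ t, H t = H_B + H' t)
    (hJ : ∀ t ∈ Set.Icc (0:ℝ) T, ‖H' t‖ ≤ J)
    (hε : ∀ t ∈ Set.Icc (0:ℝ) T, ‖H t‖ ≤ ε)
    (Δ : Set ℝ)
    (hδ0 : 0 ≤ δ) (hδ : volume Δ = ENNReal.ofReal δ) (hδT : δ ≤ T)
    (hsym : ∀ t ∈ Set.Icc (0:ℝ) T \ Δ, H (T - t) = H t) :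
    ‖(-(1/2 : ℝ)) • ∫ s₁ in (0:ℝ)..T, ∫ s₂ in (0:ℝ)..s₁,
        (H s₁ * H s₂ - H s₂ * H s₁)‖
      ≤ 2 * J * ε * (δ * T - δ^2 / 2) := by
  have h0 : (0:ℝ) ∈ Icc 0 T := left_mem_Icc.2 hT
  have hJ0 : 0 ≤ J := (norm_nonneg _).trans (hJ 0 h0)
  have hε0 : 0 ≤ ε := (norm_nonneg _).trans (hε 0 h0)
  have hHc : ContinuousOn H (Icc 0 T) := (continuousOn_const.add hcont).congr fun t _ => hH t
  have hdefect : ∫ t in (0:ℝ)..T, ‖H t - H (T - t)‖ ≤ 2 * J * δ := by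
    have hreflect : MapsTo (fun t => T - t) (Icc 0 T) (Icc 0 T) := fun t ht =>
      ⟨by linarith [ht.2], by linarith [ht.1]⟩
    have hΔ : volume.real Δ = δ := by rw [measureReal_def, hδ, ENNReal.toReal_ofReal hδ0]
    refine hΔ ▸ integral_le_mul_measureReal_of_le_indicator hT
      ((hHc.sub (hHc.comp (continuousOn_const.sub continuousOn_id) hreflect)).norm
        |>.intervalIntegrable_of_Icc hT) (by positivity) (by simp [hδ]) fun t ht => ?_
    by_cases htΔ : t ∈ Δ
    · rw [indicator_of_mem htΔ, hH, hH, add_sub_add_left_eq_sub, two_mul]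
      exact (norm_sub_le _ _).trans (add_le_add (hJ t ht) (hJ _ (hreflect ht)))
    · rw [indicator_of_notMem htΔ, hsym t ⟨ht, htΔ⟩, sub_self, norm_zero]
  simp only [← Ring.lie_def]
  rw [integral_integral_lie_eq_integral_lie_primitive (uIcc_of_le hT ▸ hHc)]
  set I := ∫ t in (0:ℝ)..T, ⁅H t, ∫ s in (0:ℝ)..t, H s⁆
  have hI : ‖I‖ ≤ ε * T * (2 * J * δ) :=
    (norm_integral_lie_primitive_le hT hHc hε).trans (by gcongr)
  calc ‖(-(1/2 : ℝ)) • I‖ = ‖I‖ / 2 := by rw [norm_smul]; norm_num; ring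
    _ ≤ J * ε * δ * T := by linarith
    _ ≤ 2 * J * ε * (δ * T - δ ^ 2 / 2) := by
        nlinarith [mul_nonneg (mul_nonneg hJ0 hε0) (mul_nonneg hδ0 (sub_nonneg.2 hδT))]

/-- Bound on the second-order Magnus term for a nearly time-symmetric Hamiltonian.
If `H t = H_B + H' t` with `‖H' t‖ ≤ J` and `‖H t‖ ≤ ε` on `[0,T]`, and `H(T - t) = H(t)` holds
outside a reflection-invariant measurable set `Δ ⊆ [0,T]` of Lebesgue measure `δ ≤ T`, then
`‖Ω₂(T)‖ ≤ 2 J ε (δT - δ²/2)`. -/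
theorem magnus_second_order_time_symmetric_bound
    {A : Type*} [NormedRing A] [NormedAlgebra ℂ A] [CompleteSpace A]
    (T J ε δ : ℝ) (hT : 0 ≤ T)
    (H_B : A) (H' : ℝ → A) (hcont : ContinuousOn H' (Set.Icc 0 T))
    (H : ℝ → A) (hH : ∀ t, H t = H_B + H' t)
    (hJ : ∀ t ∈ Set.Icc (0:ℝ) T, ‖H' t‖ ≤ J)
    (hε : ∀ t ∈ Set.Icc (0:ℝ) T, ‖H t‖ ≤ ε)
    (Δ : Set ℝ) (hΔsub : Δ ⊆ Set.Icc 0 T) (hΔmeas : MeasurableSet Δ)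
    (hδ0 : 0 ≤ δ) (hδ : volume Δ = ENNReal.ofReal δ) (hδT : δ ≤ T)
    (hΔsym : ∀ t ∈ Δ, T - t ∈ Δ)
    (hsym : ∀ t ∈ Set.Icc (0:ℝ) T \ Δ, H (T - t) = H t) :
    ‖(-(1/2 : ℝ)) • ∫ s₁ in (0:ℝ)..T, ∫ s₂ in (0:ℝ)..s₁,
        (H s₁ * H s₂ - H s₂ * H s₁)‖
      ≤ 2 * J * ε * (δ * T - δ^2 / 2) :=
  magnus_second_order_time_symmetric_bound_general T J ε δ hT H_B H' hcont H hH hJ hε Δ hδ0 hδ hδT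
    hsym
end

section
/- Let A be a complex Banach algebra, let H_B ∈ A with ‖H_B‖ ≤ β, let H′ : [0,T] → A be continuous with ‖H′(t)‖ ≤ J for all t ∈ [0,T] (β, J ≥ 0, T ≥ 0), and let n ≥ 1. Then the n-th order time-ordered (Dyson) integral satisfies ‖ ∫_{0 ≤ t_n ≤ … ≤ t₁ ≤ T} (H_B + H′(t₁))(H_B + H′(t₂))⋯(H_B + H′(t_n)) dt₁⋯dt_n − (Tⁿ/n!) H_Bⁿ ‖ ≤ (Tⁿ/n!) ((β + J)ⁿ − βⁿ) ≤ (1/(n−1)!) (JT) ((β+J)T)^{n−1}, where the last step uses the convexity inequality (β+J)ⁿ − βⁿ ≤ nJ(β+J)^{n−1}. -/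
/-!
The `n!` copies of the ordered simplex obtained by permuting coordinates cover the cube `[0,T]ⁿ`
and overlap only on the null set of non-injective tuples, so the simplex has volume `Tⁿ/n!`.
Pointwise, telescoping `a₁⋯aₙ - cⁿ` one factor at a time bounds the integrand's deviation from
`H_Bⁿ` by `(β+J)ⁿ - βⁿ`; integrating this constant over the simplex gives the first inequality,
and the mean value bound `aⁿ - bⁿ ≤ n (a-b) aⁿ⁻¹` the second.
-/

open MeasureTheory Set Function

def orderedSimplex (s : Set ℝ) (n : ℕ) : Set (Fin n → ℝ) :=
  {t | (∀ i, t i ∈ s) ∧ Antitone t}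

theorem isClosed_setOf_antitone {ι α : Type*} [Preorder ι] [TopologicalSpace α] [Preorder α]
    [OrderClosedTopology α] : IsClosed {f : ι → α | Antitone f} := by
  simp only [Antitone, ofPred_forall]
  exact isClosed_iInter fun i => isClosed_iInter fun j => isClosed_iInter fun _ =>
    isClosed_le (continuous_apply j) (continuous_apply i)

section OrderedSimplex

variable {s : Set ℝ} {n : ℕ}

theorem orderedSimplex_eq_pi_inter :
    orderedSimplex s n = univ.pi (fun _ => s) ∩ {t | Antitone t} := by
  ext t
  simp [orderedSimplex]

theorem isCompact_orderedSimplex (hs : IsCompact s) : IsCompact (orderedSimplex s n) := by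
  rw [orderedSimplex_eq_pi_inter]
  exact (isCompact_univ_pi fun _ => hs).inter_right isClosed_setOf_antitone

theorem measurableSet_orderedSimplex (hs : MeasurableSet s) :
    MeasurableSet (orderedSimplex s n) := by
  rw [orderedSimplex_eq_pi_inter]
  exact (MeasurableSet.univ_pi fun _ => hs).inter isClosed_setOf_antitone.measurableSet

theorem iUnion_preimage_comp_perm_orderedSimplex :
    ⋃ σ : Equiv.Perm (Fin n), (· ∘ σ) ⁻¹' orderedSimplex s n = univ.pi fun _ => s := by
  ext t
  simp only [mem_iUnion, mem_preimage, orderedSimplex, mem_ofPred_eq, comp_apply, mem_univ_pi]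
  refine ⟨fun ⟨σ, hσ, _⟩ i => by simpa using hσ (σ.symm i), fun ht => ?_⟩
  exact ⟨Fin.revPerm.trans (Tuple.sort t), fun i => ht _,
    (Tuple.monotone_sort t).comp_antitone Fin.rev_anti⟩

theorem volume_setOf_not_injective : volume {t : Fin n → ℝ | ¬ Injective t} = 0 := by
  let diff (i j : Fin n) : (Fin n → ℝ) →ₗ[ℝ] ℝ :=
    LinearMap.proj (R := ℝ) (φ := fun _ => ℝ) i - LinearMap.proj j
  have hdiag : {t : Fin n → ℝ | ¬ Injective t} =
      ⋃ i, ⋃ j, ⋃ (_ : i ≠ j), (LinearMap.ker (diff i j) : Set (Fin n → ℝ)) := by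
    ext t
    simp [diff, Injective, sub_eq_zero, and_comm]
  rw [hdiag]
  refine measure_iUnion_null fun i => measure_iUnion_null fun j => measure_iUnion_null fun hij => ?_
  refine Measure.addHaar_submodule _ _ (LinearMap.ker_eq_top.not.2 fun h => ?_)
  simpa [diff, hij.symm] using LinearMap.congr_fun h (Pi.single i 1)

theorem volume_preimage_comp_perm {S : Set (Fin n → ℝ)} (hS : MeasurableSet S)
    (σ : Equiv.Perm (Fin n)) : volume ((· ∘ σ) ⁻¹' S) = volume S := by
  have hσ := (volume_measurePreserving_piCongrLeft (fun _ : Fin n => ℝ) σ).symm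
  exact hσ.measure_preimage hS.nullMeasurableSet

theorem aedisjoint_preimage_comp_perm_orderedSimplex :
    Pairwise (AEDisjoint volume on
      fun σ : Equiv.Perm (Fin n) => (· ∘ σ) ⁻¹' orderedSimplex s n) := by
  -- an injective tuple has at most one antitone rearrangement
  refine fun σ τ hστ => measure_mono_null (fun t ⟨hσ, hτ⟩ => ?_) volume_setOf_not_injective
  exact fun hinj => hστ (Equiv.ext (congrFun (hinj.comp_left (Tuple.unique_antitone hσ.2 hτ.2))))

theorem volume_orderedSimplex (hs : MeasurableSet s) :
    volume (orderedSimplex s n) = volume s ^ n / n.factorial := by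
  have hS := measurableSet_orderedSimplex (n := n) hs
  have hcopies :
      volume (univ.pi fun _ : Fin n => s) = n.factorial * volume (orderedSimplex s n) := by
    rw [← iUnion_preimage_comp_perm_orderedSimplex, measure_iUnion₀
      aedisjoint_preimage_comp_perm_orderedSimplex
      fun σ => (hS.preimage (by fun_prop)).nullMeasurableSet, tsum_fintype]
    simp only [volume_preimage_comp_perm hS, Finset.sum_const, Finset.card_univ,
      Fintype.card_perm, Fintype.card_fin, nsmul_eq_mul]
  rw [ENNReal.eq_div_iff (by simp [n.factorial_ne_zero]) (ENNReal.natCast_ne_top _), ← hcopies,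
    volume_pi_pi, Finset.prod_const, Finset.card_univ, Fintype.card_fin]

theorem measureReal_orderedSimplex_Icc {T : ℝ} (hT : 0 ≤ T) (n : ℕ) :
    volume.real (orderedSimplex (Icc 0 T) n) = T ^ n / n.factorial := by
  rw [measureReal_def, volume_orderedSimplex measurableSet_Icc, Real.volume_Icc, sub_zero,
    ENNReal.toReal_div, ENNReal.toReal_pow, ENNReal.toReal_ofReal hT, ENNReal.toReal_natCast]

end OrderedSimplex

theorem norm_setIntegral_sub_smul_le {X E : Type*} [MeasurableSpace X] [NormedAddCommGroup E]
    [NormedSpace ℝ E] [CompleteSpace E] {μ : Measure X} {S : Set X} {f : X → E} {c : E} {C : ℝ}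
    (hS : μ S < ⊤) (hf : IntegrableOn f S μ) (hfc : ∀ x ∈ S, ‖f x - c‖ ≤ C) :
    ‖∫ x in S, f x ∂μ - μ.real S • c‖ ≤ μ.real S * C := by
  rw [← setIntegral_const, ← integral_sub hf (integrableOn_const hS.ne), mul_comm]
  exact norm_setIntegral_le_of_norm_le_const hS hfc

theorem norm_mul_pow_le {A : Type*} [SeminormedRing A] (x c : A) (k : ℕ) :
    ‖x * c ^ k‖ ≤ ‖x‖ * ‖c‖ ^ k := by
  induction k with
  | zero => simp
  | succ k ih =>
    rw [pow_succ, ← mul_assoc, pow_succ, ← mul_assoc]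
    exact (norm_mul_le _ _).trans (mul_le_mul_of_nonneg_right ih (norm_nonneg c))

theorem norm_ofFn_prod_sub_pow_le {A : Type*} [SeminormedRing A] {c : A} {β J : ℝ}
    (hc : ‖c‖ ≤ β) :
    ∀ {n : ℕ} {a : Fin n → A}, (∀ i, ‖a i - c‖ ≤ J) →
      ‖(List.ofFn a).prod - c ^ n‖ ≤ (β + J) ^ n - β ^ n
  | 0, _, _ => by simp
  | k + 1, a, ha => by
    set P := (List.ofFn fun i : Fin k => a i.succ).prod
    have hP : ‖P - c ^ k‖ ≤ (β + J) ^ k - β ^ k := norm_ofFn_prod_sub_pow_le hc fun i => ha i.succ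
    have hJ : 0 ≤ J := (norm_nonneg _).trans (ha 0)
    have ha₀ : ‖a 0‖ ≤ β + J := (norm_le_norm_add_norm_sub' _ c).trans (add_le_add hc (ha 0))
    have hsplit : (List.ofFn a).prod - c ^ (k + 1) = a 0 * (P - c ^ k) + (a 0 - c) * c ^ k := by
      rw [List.ofFn_succ, List.prod_cons, pow_succ']
      noncomm_ring
    calc ‖(List.ofFn a).prod - c ^ (k + 1)‖
        ≤ ‖a 0‖ * ‖P - c ^ k‖ + ‖a 0 - c‖ * ‖c‖ ^ k := by
          rw [hsplit]
          exact (norm_add_le _ _).trans (add_le_add (norm_mul_le _ _) (norm_mul_pow_le _ _ _))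
      _ ≤ (β + J) * ((β + J) ^ k - β ^ k) + J * β ^ k := by
          gcongr
          · exact (norm_nonneg _).trans ha₀
          · exact ha 0
      _ = (β + J) ^ (k + 1) - β ^ (k + 1) := by ring

theorem ContinuousOn.list_prod_ofFn_comp {A X : Type*} [Monoid A] [TopologicalSpace A]
    [ContinuousMul A] [TopologicalSpace X] {n : ℕ} {H : X → A} {s : Set X}
    (hH : ContinuousOn H s) :
    ContinuousOn (fun t : Fin n → X => (List.ofFn fun i => H (t i)).prod) (univ.pi fun _ => s) := by
  simp_rw [List.ofFn_eq_map]
  exact continuousOn_list_prod _ fun i _ =>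
    hH.comp (continuous_apply i).continuousOn fun t ht => ht i (mem_univ i)

theorem pow_sub_pow_le_of_le {R : Type*} [CommRing R] [LinearOrder R] [IsOrderedRing R] {a b : R}
    (hb : 0 ≤ b) (hba : b ≤ a) (n : ℕ) : a ^ n - b ^ n ≤ (a - b) * n * a ^ (n - 1) := by
  have := (le_abs_self _).trans (abs_pow_sub_pow_le a b n)
  rwa [abs_of_nonneg (sub_nonneg.2 hba), abs_of_nonneg (hb.trans hba), abs_of_nonneg hb,
    max_eq_left hba] at this

/-- Bound on the `n`-th order time-ordered (Dyson) integral.  With `‖H_B‖ ≤ β` and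
`‖H' t‖ ≤ J` on `[0,T]`, the integral over the ordered simplex
`0 ≤ tₙ ≤ ⋯ ≤ t₁ ≤ T` of the ordered product `(H_B + H'(t₁)) ⋯ (H_B + H'(tₙ))` deviates from
the pure-bath term `(Tⁿ/n!) H_Bⁿ` by at most `(Tⁿ/n!)((β+J)ⁿ - βⁿ)`, which is itself at most
`(1/(n-1)!)(JT)((β+J)T)^{n-1}`. -/
theorem dyson_nth_order_bound
    {A : Type*} [NormedRing A] [NormedAlgebra ℂ A] [CompleteSpace A]
    (n : ℕ) (hn : 1 ≤ n) (T β J : ℝ) (hT : 0 ≤ T) (hβ : 0 ≤ β) (hJ : 0 ≤ J)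
    (H_B : A) (hHB : ‖H_B‖ ≤ β)
    (H' : ℝ → A) (hcont : ContinuousOn H' (Set.Icc 0 T))
    (hbound : ∀ t ∈ Set.Icc (0:ℝ) T, ‖H' t‖ ≤ J) :
    ‖(∫ t in {t : Fin n → ℝ | (∀ i, t i ∈ Set.Icc (0:ℝ) T) ∧
          ∀ i j : Fin n, i ≤ j → t j ≤ t i},
        (List.ofFn (fun i => H_B + H' (t i))).prod)
      - (T^n / n.factorial) • H_B^n‖
      ≤ T^n / n.factorial * ((β + J)^n - β^n) ∧
    T^n / n.factorial * ((β + J)^n - β^n)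
      ≤ (1 / (n-1).factorial) * (J*T) * ((β+J)*T)^(n-1) := by
  have hS : IsCompact (orderedSimplex (Icc 0 T) n) := isCompact_orderedSimplex isCompact_Icc
  have hint : IntegrableOn (fun t : Fin n → ℝ => (List.ofFn fun i => H_B + H' (t i)).prod)
      (orderedSimplex (Icc 0 T) n) :=
    ((continuousOn_const.add hcont).list_prod_ofFn_comp.mono
      fun _ ht => mem_univ_pi.2 ht.1).integrableOn_compact hS
  have hdev : ∀ t ∈ orderedSimplex (Icc 0 T) n,
      ‖(List.ofFn fun i => H_B + H' (t i)).prod - H_B ^ n‖ ≤ (β + J) ^ n - β ^ n :=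
    fun t ht => norm_ofFn_prod_sub_pow_le hHB fun i => by simpa using hbound _ (ht.1 i)
  refine ⟨?_, ?_⟩
  · rw [← measureReal_orderedSimplex_Icc hT n]
    exact norm_setIntegral_sub_smul_le hS.measure_lt_top hint hdev
  · obtain ⟨m, rfl⟩ := Nat.exists_eq_add_of_le' hn
    calc T ^ (m + 1) / (m + 1).factorial * ((β + J) ^ (m + 1) - β ^ (m + 1))
        ≤ T ^ (m + 1) / (m + 1).factorial * (J * (m + 1 : ℕ) * (β + J) ^ m) := by
          gcongr
          simpa using pow_sub_pow_le_of_le hβ (le_add_of_nonneg_right hJ) (m + 1)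
      _ = 1 / m.factorial * (J * T) * ((β + J) * T) ^ m := by
          rw [Nat.factorial_succ, mul_pow]
          push_cast
          field_simp
          ring
end

section
/- Let A be a complex Banach algebra, let A : [0,∞) → A be continuous with ‖A(t)‖ ≤ ε for all t, and suppose A(t) = A_B(t) + A′(t) where A_B(t) commutes with A_B(s) for all s, t (e.g. A_B(t) = ±(−i)H_B for a fixed H_B) and ‖A′(t)‖ ≤ J with J ≤ ε, so that ‖[A(s), A(t)]‖ ≤ 4Jε for all s, t. Define families Ω_n : [0,∞) → A and S_n^{(j)} : [0,∞) → A by: Ω₁(t) = ∫_0^t A(s) ds; Ω_n(t) = ∑_{j=1}^{n−1} (B_j/j!) ∫_0^t S_n^{(j)}(s) ds for n ≥ 2; S_n^{(1)}(t) = [Ω_{n−1}(t), A(t)]; and S_n^{(j)}(t) = ∑_{m=1}^{n−j} [Ω_m(t), S_{n−m}^{(j−1)}(t)] for 2 ≤ j ≤ n−1, where B_j are the Bernoulli numbers. Define coefficients f_n^{(j)} recursively by f₁^{(0)} = 1, f_n^{(0)} = 0 for n > 1, and f_n^{(j)} = 2 ∑_{m=1}^{n−j} ∑_{p=0}^{m−1}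 (|B_p|/(p! m)) f_m^{(p)} f_{n−m}^{(j−1)} for n ≥ 2. Then for all n ≥ 2, all 1 ≤ j ≤ n−1, and all t ≥ 0: ‖S_n^{(j)}(t)‖ ≤ f_n^{(j)} · J · (2εt)^{n−1}. -/
/-!
Strong induction on `n`. Put `g_m = ∑_{p<m} |B_p| / (p! m) f_m^{(p)}` (`omegaCoeff f m`).
Integrating the bounds on `S_m^{(j)}` gives `‖Ω_m(t)‖ ≤ g_m (2εt)^{m-1} J t` for `m ≥ 2`, and
`‖Ω_1(t)‖ ≤ εt`. Since `‖[x, y]‖ ≤ 2‖x‖‖y‖`, this bounds `S_n^{(1)} = [Ω_{n-1}, A]` for `n ≥ 3`;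
for `n = 2` one writes `[Ω_1(t), A(t)] = ∫_0^t [A(s), A(t)] ds` and uses `‖[A(s), A(t)]‖ ≤ 4Jε`.
For `j ≥ 2`, the weaker bound `‖Ω_m(t)‖ ≤ g_m (2εt)^m` (from `J ≤ 2ε`) bounds each term
`[Ω_m, S_{n-m}^{(j-1)}]` by `2 g_m f_{n-m}^{(j-1)} J (2εt)^{n-1}`, and these sum to
`f_n^{(j)} J (2εt)^{n-1}` because the recursion for `f` reads `f_n^{(j)} = 2 ∑_m g_m f_{n-m}^{(j-1)}`.
-/

open Finset MeasureTheory

theorem norm_mul_sub_mul_le {R : Type*} [NonUnitalSeminormedRing R] {x y : R} {a b : ℝ}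
    (hx : ‖x‖ ≤ a) (hy : ‖y‖ ≤ b) : ‖x * y - y * x‖ ≤ 2 * a * b :=
  calc ‖x * y - y * x‖ ≤ ‖x‖ * ‖y‖ + ‖y‖ * ‖x‖ :=
        (norm_sub_le _ _).trans (add_le_add (norm_mul_le _ _) (norm_mul_le _ _))
    _ = 2 * (‖x‖ * ‖y‖) := by ring
    _ ≤ 2 * a * b := by
        rw [mul_assoc]
        gcongr
        exact (norm_nonneg x).trans hx

theorem norm_integral_le_of_norm_le_mul_pow {E : Type*} [NormedAddCommGroup E] [NormedSpace ℝ E]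
    {F : ℝ → E} {C t : ℝ} {k : ℕ} (ht : 0 ≤ t) (hF : ∀ s ∈ Set.Ioc 0 t, ‖F s‖ ≤ C * s ^ k) :
    ‖∫ s in (0 : ℝ)..t, F s‖ ≤ C * t ^ (k + 1) / (k + 1) := by
  calc ‖∫ s in (0 : ℝ)..t, F s‖ ≤ ∫ s in (0 : ℝ)..t, C * s ^ k :=
        intervalIntegral.norm_integral_le_of_norm_le ht (ae_of_all _ hF)
          ((continuous_const.mul (continuous_pow k)).intervalIntegrable _ _)
    _ = C * t ^ (k + 1) / (k + 1) := by simp [mul_div_assoc]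

theorem intervalIntegral.integral_mul_sub_mul {𝔸 : Type*} [NormedRing 𝔸] [NormedAlgebra ℝ 𝔸]
    {F : ℝ → 𝔸} {a b : ℝ} (hF : IntervalIntegrable F volume a b) (x : 𝔸) :
    ∫ s in a..b, (F s * x - x * F s) = (∫ s in a..b, F s) * x - x * ∫ s in a..b, F s := by
  rw [intervalIntegral.integral_sub (hF.mul_const x) (hF.const_mul x)]
  simp only [intervalIntegral, integral_mul_const_of_integrable hF.1,
    integral_mul_const_of_integrable hF.2, integral_const_mul_of_integrable hF.1,
    integral_const_mul_of_integrable hF.2, sub_mul, mul_sub]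

theorem norm_integral_mul_sub_mul_le {𝔸 : Type*} [NormedRing 𝔸] [NormedAlgebra ℝ 𝔸]
    {A : ℝ → 𝔸} {K t : ℝ} (ht : 0 ≤ t) (hA : ContinuousOn A (Set.Icc 0 t))
    (hK : ∀ s ∈ Set.Ioc 0 t, ‖A s * A t - A t * A s‖ ≤ K) :
    ‖(∫ s in (0 : ℝ)..t, A s) * A t - A t * ∫ s in (0 : ℝ)..t, A s‖ ≤ K * t := by
  rw [← intervalIntegral.integral_mul_sub_mul (hA.intervalIntegrable_of_Icc ht)]
  refine (intervalIntegral.norm_integral_le_of_norm_le_const ?_).trans_eq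
    (by rw [sub_zero, abs_of_nonneg ht])
  rwa [Set.uIoc_of_le ht]

noncomputable def omegaCoeff (f : ℕ → ℕ → ℝ) (m : ℕ) : ℝ :=
  ∑ p ∈ range m, |(bernoulli p : ℝ)| / (p.factorial * m) * f m p

structure IsMagnusCoeff (f : ℕ → ℕ → ℝ) : Prop where
  one_zero : f 1 0 = 1
  zero_of_one_lt : ∀ n, 1 < n → f n 0 = 0
  eq_sum : ∀ n j, 2 ≤ n → 1 ≤ j → j ≤ n - 1 →
    f n j = 2 * ∑ m ∈ Icc 1 (n - j), ∑ p ∈ range m,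
      (|(bernoulli p : ℝ)| / (p.factorial * m)) * f m p * f (n - m) (j - 1)

namespace IsMagnusCoeff

variable {f : ℕ → ℕ → ℝ}

theorem nonneg (hf : IsMagnusCoeff f) {n j : ℕ} (hjn : j < n) : 0 ≤ f n j := by
  induction n using Nat.strong_induction_on generalizing j with
  | _ n ih =>
  rcases Nat.eq_zero_or_pos j with rfl | hj
  · obtain rfl | hn := (show n = 1 ∨ 1 < n by omega)
    · exact hf.one_zero.ge.trans' zero_le_one
    · exact (hf.zero_of_one_lt n hn).ge
  rw [hf.eq_sum n j (by omega) hj (by omega)]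
  refine mul_nonneg zero_le_two (sum_nonneg fun m hm => sum_nonneg fun p hp => ?_)
  rw [mem_Icc] at hm
  rw [mem_range] at hp
  exact mul_nonneg (mul_nonneg (by positivity) (ih m (by omega) hp))
    (ih (n - m) (by omega) (by omega))

theorem omegaCoeff_nonneg (hf : IsMagnusCoeff f) (m : ℕ) : 0 ≤ omegaCoeff f m :=
  sum_nonneg fun p hp => mul_nonneg (by positivity) (hf.nonneg (mem_range.1 hp))

theorem omegaCoeff_one (hf : IsMagnusCoeff f) : omegaCoeff f 1 = 1 := by
  simp [omegaCoeff, hf.one_zero]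

theorem omegaCoeff_eq_sum_Icc (hf : IsMagnusCoeff f) {n : ℕ} (hn : 2 ≤ n) :
    omegaCoeff f n =
      ∑ j ∈ Icc 1 (n - 1), |(bernoulli j : ℝ)| / (j.factorial * n) * f n j := by
  have hrange : range n = insert 0 (Icc 1 (n - 1)) := by
    ext p
    simp only [mem_range, mem_insert, mem_Icc]
    omega
  rw [omegaCoeff, hrange, sum_insert (by simp), hf.zero_of_one_lt n (by omega), mul_zero,
    zero_add]

theorem eq_two_mul_sum_omegaCoeff (hf : IsMagnusCoeff f) {n j : ℕ} (hj : 1 ≤ j) (hjn : j < n) :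
    f n j = 2 * ∑ m ∈ Icc 1 (n - j), omegaCoeff f m * f (n - m) (j - 1) := by
  simp only [hf.eq_sum n j (by omega) hj (by omega), omegaCoeff, sum_mul]

theorem apply_one (hf : IsMagnusCoeff f) {m : ℕ} (hm : 1 ≤ m) :
    f (m + 1) 1 = 2 * omegaCoeff f m := by
  rw [hf.eq_two_mul_sum_omegaCoeff le_rfl (by omega), Nat.add_sub_cancel,
    sum_eq_single_of_mem m (by simp [hm]), Nat.add_sub_cancel_left, hf.one_zero, mul_one]
  intro k hk hkm
  rw [mem_Icc] at hk
  rw [hf.zero_of_one_lt _ (by omega), mul_zero]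

theorem norm_sum_bernoulli_smul_integral_le {E : Type*} [NormedAddCommGroup E] [NormedSpace ℝ E]
    (hf : IsMagnusCoeff f) {S : ℕ → ℝ → E} {n : ℕ} {ε J t : ℝ} (hn : 2 ≤ n) (ht : 0 ≤ t)
    (hS : ∀ j, 1 ≤ j → j ≤ n - 1 → ∀ s, 0 ≤ s → ‖S j s‖ ≤ f n j * J * (2 * ε * s) ^ (n - 1)) :
    ‖∑ j ∈ Icc 1 (n - 1), ((bernoulli j : ℝ) / j.factorial) • ∫ s in (0 : ℝ)..t, S j s‖ ≤
      omegaCoeff f n * (2 * ε * t) ^ (n - 1) * (J * t) := by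
  have hterm : ∀ j ∈ Icc 1 (n - 1),
      ‖((bernoulli j : ℝ) / j.factorial) • ∫ s in (0 : ℝ)..t, S j s‖ ≤
        |(bernoulli j : ℝ)| / (j.factorial * n) * f n j * ((2 * ε * t) ^ (n - 1) * (J * t)) := by
    intro j hj
    rw [mem_Icc] at hj
    have hint := norm_integral_le_of_norm_le_mul_pow (C := f n j * J * (2 * ε) ^ (n - 1))
      (k := n - 1) ht fun s hs => (hS j hj.1 hj.2 s hs.1.le).trans_eq (by ring)
    have hn' : ((n - 1 : ℕ) : ℝ) + 1 = n := by rw [Nat.cast_sub (by omega)]; ring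
    rw [Nat.sub_add_cancel (by omega), hn'] at hint
    rw [norm_smul, Real.norm_eq_abs, abs_div, Nat.abs_cast]
    calc _ ≤ |(bernoulli j : ℝ)| / j.factorial * (f n j * J * (2 * ε) ^ (n - 1) * t ^ n / n) := by
          gcongr
      _ = _ := by
          have hpow : (2 * ε * t) ^ (n - 1) * t = (2 * ε) ^ (n - 1) * t ^ n := by
            rw [mul_pow, mul_assoc, ← pow_succ, Nat.sub_add_cancel (by omega)]
          rw [mul_left_comm _ J, hpow]
          field_simp
  calc _ ≤ _ := (norm_sum_le _ _).trans (sum_le_sum hterm)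
    _ = _ := by rw [← sum_mul, ← hf.omegaCoeff_eq_sum_Icc hn]; ring

theorem norm_sum_bernoulli_smul_integral_le_pow {E : Type*} [NormedAddCommGroup E]
    [NormedSpace ℝ E] (hf : IsMagnusCoeff f) {S : ℕ → ℝ → E} {n : ℕ} {ε J t : ℝ} (hn : 2 ≤ n)
    (hε : 0 ≤ ε) (ht : 0 ≤ t) (hJε : J ≤ 2 * ε)
    (hS : ∀ j, 1 ≤ j → j ≤ n - 1 → ∀ s, 0 ≤ s → ‖S j s‖ ≤ f n j * J * (2 * ε * s) ^ (n - 1)) :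
    ‖∑ j ∈ Icc 1 (n - 1), ((bernoulli j : ℝ) / j.factorial) • ∫ s in (0 : ℝ)..t, S j s‖ ≤
      omegaCoeff f n * (2 * ε * t) ^ n := by
  have := hf.omegaCoeff_nonneg n
  calc _ ≤ omegaCoeff f n * (2 * ε * t) ^ (n - 1) * (J * t) :=
        hf.norm_sum_bernoulli_smul_integral_le hn ht hS
    _ ≤ omegaCoeff f n * (2 * ε * t) ^ (n - 1) * (2 * ε * t) := by gcongr
    _ = omegaCoeff f n * (2 * ε * t) ^ n := by
        rw [mul_assoc, ← pow_succ, Nat.sub_add_cancel (by omega)]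

variable {R : Type*} [NonUnitalSeminormedRing R]

theorem norm_mul_sub_mul_le_apply_one (hf : IsMagnusCoeff f) {x y : R} {m : ℕ} {ε J t : ℝ}
    (hm : 1 ≤ m) (hJ : 0 ≤ J) (hε : 0 ≤ ε) (ht : 0 ≤ t)
    (hx : ‖x‖ ≤ omegaCoeff f m * (2 * ε * t) ^ (m - 1) * (J * t)) (hy : ‖y‖ ≤ ε) :
    ‖x * y - y * x‖ ≤ f (m + 1) 1 * J * (2 * ε * t) ^ m := by
  have hpos : 0 ≤ omegaCoeff f m * J * (2 * ε * t) ^ m := by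
    have := hf.omegaCoeff_nonneg m
    positivity
  calc ‖x * y - y * x‖ ≤ 2 * (omegaCoeff f m * (2 * ε * t) ^ (m - 1) * (J * t)) * ε :=
        norm_mul_sub_mul_le hx hy
    _ = omegaCoeff f m * J * (2 * ε * t) ^ m := by
        rw [← Nat.sub_add_cancel hm, pow_succ, Nat.add_sub_cancel]
        ring
    _ ≤ f (m + 1) 1 * J * (2 * ε * t) ^ m := by
        rw [hf.apply_one hm]
        linarith

theorem norm_sum_mul_sub_mul_le (hf : IsMagnusCoeff f) {n j : ℕ} (hj : 1 ≤ j) (hjn : j < n)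
    {x y : ℕ → R} {c J : ℝ} (hx : ∀ m ∈ Icc 1 (n - j), ‖x m‖ ≤ omegaCoeff f m * c ^ m)
    (hy : ∀ m ∈ Icc 1 (n - j), ‖y m‖ ≤ f (n - m) (j - 1) * J * c ^ (n - m - 1)) :
    ‖∑ m ∈ Icc 1 (n - j), (x m * y m - y m * x m)‖ ≤ f n j * J * c ^ (n - 1) := by
  calc _ ≤ ∑ m ∈ Icc 1 (n - j),
          2 * (omegaCoeff f m * c ^ m) * (f (n - m) (j - 1) * J * c ^ (n - m - 1)) :=
        (norm_sum_le _ _).trans (sum_le_sum fun m hm => norm_mul_sub_mul_le (hx m hm) (hy m hm))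
    _ = f n j * J * c ^ (n - 1) := by
        rw [hf.eq_two_mul_sum_omegaCoeff hj hjn, mul_sum, sum_mul, sum_mul]
        refine sum_congr rfl fun m hm => ?_
        rw [mem_Icc] at hm
        rw [show n - 1 = m + (n - m - 1) by omega, pow_add]
        ring

end IsMagnusCoeff

theorem magnus_Snj_bound_general
    {𝔸 : Type*} [NormedRing 𝔸] [NormedAlgebra ℂ 𝔸]
    (ε J : ℝ) (hJ : 0 ≤ J) (hJε : J ≤ ε)
    (A : ℝ → 𝔸)
    (hAcont : ContinuousOn A (Set.Ici 0))
    (hAbound : ∀ t : ℝ, 0 ≤ t → ‖A t‖ ≤ ε)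
    (hcommbound : ∀ s t : ℝ, 0 ≤ s → 0 ≤ t →
      ‖A s * A t - A t * A s‖ ≤ 4 * J * ε)
    (Ω : ℕ → ℝ → 𝔸) (S : ℕ → ℕ → ℝ → 𝔸)
    (hΩ1 : ∀ t, Ω 1 t = ∫ s in (0:ℝ)..t, A s)
    (hΩn : ∀ n, 2 ≤ n → ∀ t, Ω n t =
      ∑ j ∈ Finset.Icc 1 (n-1),
        ((bernoulli j : ℝ) / j.factorial) • ∫ s in (0:ℝ)..t, S n j s)
    (hS1 : ∀ n, 2 ≤ n → ∀ t, S n 1 t = Ω (n-1) t * A t - A t * Ω (n-1) t)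
    (hSj : ∀ n j, 2 ≤ j → j ≤ n - 1 → ∀ t,
      S n j t = ∑ m ∈ Finset.Icc 1 (n-j),
        (Ω m t * S (n-m) (j-1) t - S (n-m) (j-1) t * Ω m t))
    (f : ℕ → ℕ → ℝ)
    (hf10 : f 1 0 = 1)
    (hfn0 : ∀ n, 1 < n → f n 0 = 0)
    (hfnj : ∀ n j, 2 ≤ n → 1 ≤ j → j ≤ n - 1 →
      f n j = 2 * ∑ m ∈ Finset.Icc 1 (n-j), ∑ p ∈ Finset.range m,
        (|(bernoulli p : ℝ)| / (p.factorial * m)) * f m p * f (n-m) (j-1)) :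
    ∀ n j, 2 ≤ n → 1 ≤ j → j ≤ n - 1 → ∀ t : ℝ, 0 ≤ t →
      ‖S n j t‖ ≤ f n j * J * (2 * ε * t)^(n-1) := by
  have hf : IsMagnusCoeff f := ⟨hf10, hfn0, hfnj⟩
  have hε : 0 ≤ ε := hJ.trans hJε
  intro n
  induction n using Nat.strong_induction_on with
  | _ n ih =>
  intro j hn hj hjn t ht
  obtain rfl | hj2 := (show j = 1 ∨ 2 ≤ j by omega)
  · rw [hS1 n hn t]
    obtain rfl | hn3 := (show n = 2 ∨ 3 ≤ n by omega)
    · rw [hΩ1, show f 2 1 = 2 by simpa [hf.omegaCoeff_one] using hf.apply_one le_rfl]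
      calc _ ≤ 4 * J * ε * t := norm_integral_mul_sub_mul_le ht
              (hAcont.mono Set.Icc_subset_Ici_self) fun s hs => hcommbound s t hs.1.le ht
        _ = _ := by ring
    · obtain ⟨m, rfl⟩ : ∃ m, n = m + 1 := ⟨n - 1, by omega⟩
      rw [Nat.add_sub_cancel, hΩn m (by omega)]
      exact hf.norm_mul_sub_mul_le_apply_one (by omega) hJ hε ht
        (hf.norm_sum_bernoulli_smul_integral_le (by omega) ht (ih m (by omega) · (by omega)))
        (hAbound t ht)
  · rw [hSj n j hj2 hjn t]
    refine hf.norm_sum_mul_sub_mul_le hj (by omega) (fun m hm => ?_) fun m hm => ?_ <;>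
      rw [Finset.mem_Icc] at hm
    · obtain rfl | hm2 := (show m = 1 ∨ 2 ≤ m by omega)
      · rw [hΩ1, hf.omegaCoeff_one, one_mul, pow_one]
        refine (norm_integral_le_of_norm_le_mul_pow (C := ε) (k := 0) ht fun s hs => ?_).trans ?_
        · simpa using hAbound s hs.1.le
        · nlinarith [mul_nonneg hε ht]
      · rw [hΩn m hm2]
        exact hf.norm_sum_bernoulli_smul_integral_le_pow hm2 hε ht (by linarith)
          (ih m (by omega) · hm2)
    · exact ih (n - m) (by omega) (j - 1) (by omega) (by omega) (by omega) t ht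

/-- Bounds for the `S_n^{(j)}` operators in the recursive generation of the Magnus
expansion.  With `A t = A_B t + A' t`, where the `A_B` commute among themselves, `‖A t‖ ≤ ε`,
`‖A' t‖ ≤ J ≤ ε`, so that `‖[A s, A t]‖ ≤ 4Jε`, and with `Ωₙ`, `S_n^{(j)}` defined by the
standard Magnus recursion and coefficients `f_n^{(j)}` defined by the recursion of the paper,
one has `‖S_n^{(j)}(t)‖ ≤ f_n^{(j)} J (2εt)^{n-1}` for all `n ≥ 2`, `1 ≤ j ≤ n-1`, `t ≥ 0`. -/
theorem magnus_Snj_bound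
    {𝔸 : Type*} [NormedRing 𝔸] [NormedAlgebra ℂ 𝔸] [CompleteSpace 𝔸]
    (ε J : ℝ) (hJ : 0 ≤ J) (hJε : J ≤ ε)
    (A A_B A' : ℝ → 𝔸)
    (hAcont : ContinuousOn A (Set.Ici 0))
    (hAbound : ∀ t : ℝ, 0 ≤ t → ‖A t‖ ≤ ε)
    (hdecomp : ∀ t, A t = A_B t + A' t)
    (hABcomm : ∀ s t, A_B s * A_B t = A_B t * A_B s)
    (hA'bound : ∀ t : ℝ, 0 ≤ t → ‖A' t‖ ≤ J)
    (hcommbound : ∀ s t : ℝ, 0 ≤ s → 0 ≤ t →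
      ‖A s * A t - A t * A s‖ ≤ 4 * J * ε)
    (Ω : ℕ → ℝ → 𝔸) (S : ℕ → ℕ → ℝ → 𝔸)
    (hΩ1 : ∀ t, Ω 1 t = ∫ s in (0:ℝ)..t, A s)
    (hΩn : ∀ n, 2 ≤ n → ∀ t, Ω n t =
      ∑ j ∈ Finset.Icc 1 (n-1),
        ((bernoulli j : ℝ) / j.factorial) • ∫ s in (0:ℝ)..t, S n j s)
    (hS1 : ∀ n, 2 ≤ n → ∀ t, S n 1 t = Ω (n-1) t * A t - A t * Ω (n-1) t)
    (hSj : ∀ n j, 2 ≤ j → j ≤ n - 1 → ∀ t,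
      S n j t = ∑ m ∈ Finset.Icc 1 (n-j),
        (Ω m t * S (n-m) (j-1) t - S (n-m) (j-1) t * Ω m t))
    (f : ℕ → ℕ → ℝ)
    (hf10 : f 1 0 = 1)
    (hfn0 : ∀ n, 1 < n → f n 0 = 0)
    (hfnj : ∀ n j, 2 ≤ n → 1 ≤ j → j ≤ n - 1 →
      f n j = 2 * ∑ m ∈ Finset.Icc 1 (n-j), ∑ p ∈ Finset.range m,
        (|(bernoulli p : ℝ)| / (p.factorial * m)) * f m p * f (n-m) (j-1)) :
    ∀ n j, 2 ≤ n → 1 ≤ j → j ≤ n - 1 → ∀ t : ℝ, 0 ≤ t →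
      ‖S n j t‖ ≤ f n j * J * (2 * ε * t)^(n-1) :=
  magnus_Snj_bound_general ε J hJ hJε A hAcont hAbound hcommbound Ω S hΩ1 hΩn hS1 hSj f hf10 hfn0
    hfnj
end

section
/- For every real s with 0 < |s| < 2π, the function g(s) := 2 + (s/2)(1 − cos(s/2)/sin(s/2)) equals the convergent series ∑_{j=0}^∞ (|B_j|/j!) sʲ, where B_j are the Bernoulli numbers. (Here sin(s/2) ≠ 0 since 0 < |s| < 2π, and the identity uses B₀ = 1, |B₁| = 1/2, B_{2j+1} = 0 for j ≥ 1, together with the alternating signs of the even Bernoulli numbers and the expansion (s/2)·cot(s/2) = ∑_{j≥0} (B_j/j!) (is)ʲ + s/2.) -/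
/-!
Euler's formula `ζ(2k) = (-1)^(k+1) (2π)^(2k) B_{2k} / (2 (2k)!)` gives both the sign of the even
Bernoulli numbers and the bound `|B_n| / n! ≤ 4 / (2π)^n`, so `∑ B_n zⁿ / n!` converges absolutely
for `‖z‖ < 2π`; there its Cauchy product with `eᶻ - 1` is the numerical shadow of the formal
identity `(∑ B_n Xⁿ / n!) (exp X - 1) = X`, whence the sum is `z / (eᶻ - 1)`. At `z = i s` the real
part of `i s / (e^{is} - 1)` is `(s/2) cot(s/2)`, while the real part of the series is
`1 - s²/12 + ...` with the signs of `B_{2k}` flipped by `i^{2k} = (-1)^k`; so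
`2 + s/2 - (s/2) cot(s/2)` is exactly `∑ |B_n| sⁿ / n!`.
-/

open Finset Real
open Complex (I I_sq I_ne_zero)

theorem PowerSeries.hasSum_coeff_mul_mul_pow {R : Type*} [NormedCommRing R] [CompleteSpace R]
    {f g : PowerSeries R} {z : R} (hf : Summable fun n ↦ ‖coeff n f * z ^ n‖)
    (hg : Summable fun n ↦ ‖coeff n g * z ^ n‖) :
    HasSum (fun n ↦ coeff n (f * g) * z ^ n)
      ((∑' n, coeff n f * z ^ n) * ∑' n, coeff n g * z ^ n) := by
  have hdiag (n : ℕ) : ∑ kl ∈ antidiagonal n, coeff kl.1 f * z ^ kl.1 * (coeff kl.2 g * z ^ kl.2)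
      = coeff n (f * g) * z ^ n := by
    rw [coeff_mul, sum_mul]
    refine sum_congr rfl fun kl hkl ↦ ?_
    rw [← mem_antidiagonal.mp hkl, pow_add]
    ring
  rw [tsum_mul_tsum_eq_tsum_sum_antidiagonal_of_summable_norm hf hg]
  simpa only [hdiag] using (summable_norm_sum_mul_antidiagonal_of_summable_norm hf hg).of_norm.hasSum

theorem abs_bernoulli_two_mul {k : ℕ} (hk : k ≠ 0) :
    |(bernoulli (2 * k) : ℝ)| = (-1) ^ (k + 1) * bernoulli (2 * k) := by
  have hζ : 1 ≤ (-1 : ℝ) ^ (k + 1) * bernoulli (2 * k) *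
      (2 ^ (2 * k - 1) * π ^ (2 * k) / (2 * k).factorial) := by
    calc (1 : ℝ) = 1 / ((1 : ℕ) : ℝ) ^ (2 * k) := by simp
      _ ≤ _ := le_hasSum (hasSum_zeta_nat hk) 1 fun n _ ↦ by positivity
      _ = _ := by ring
  have hpos := pos_of_mul_pos_left (one_pos.trans_le hζ) (by positivity)
  rw [← abs_of_pos hpos, abs_mul, abs_pow, abs_neg, abs_one, one_pow, one_mul]

theorem hasSum_zeta_two_mul_abs_bernoulli {k : ℕ} (hk : k ≠ 0) :
    HasSum (fun n : ℕ ↦ 1 / (n : ℝ) ^ (2 * k))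
      (|(bernoulli (2 * k) : ℝ)| / (2 * k).factorial * (2 * π) ^ (2 * k) / 2) := by
  convert hasSum_zeta_nat hk using 1
  rw [abs_bernoulli_two_mul hk, mul_pow, ← Nat.sub_add_cancel (by omega : 1 ≤ 2 * k), pow_succ]
  simp only [Nat.add_sub_cancel]
  ring

theorem abs_bernoulli_div_factorial_le (n : ℕ) :
    |(bernoulli n : ℝ)| / n.factorial ≤ 4 / (2 * π) ^ n := by
  obtain ⟨k, rfl | rfl⟩ := Nat.even_or_odd' n
  · rcases eq_or_ne k 0 with rfl | hk
    · norm_num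
    -- `ζ(2k) ≤ ζ(2) = π² / 6 < 2`
    have hζ : |(bernoulli (2 * k) : ℝ)| / (2 * k).factorial * (2 * π) ^ (2 * k) / 2 ≤ 2 := by
      refine (hasSum_le (fun n ↦ ?_) (hasSum_zeta_two_mul_abs_bernoulli hk) hasSum_zeta_two).trans
        (by nlinarith [pi_lt_d2, pi_pos])
      rcases n.eq_zero_or_pos with rfl | hn
      · simp [hk]
      · exact one_div_le_one_div_of_le (by positivity)
          (pow_le_pow_right₀ (by exact_mod_cast hn) (by omega))
    rw [le_div_iff₀ (by positivity)]
    linarith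
  · rcases eq_or_ne k 0 with rfl | hk
    · rw [div_le_div_iff₀ (by positivity) (by positivity)]
      norm_num [bernoulli_one]
      linarith [pi_le_four]
    · rw [bernoulli_eq_zero_of_odd (odd_two_mul_add_one k) (by omega)]
      simp only [Rat.cast_zero, abs_zero, zero_div]
      positivity

theorem summable_norm_bernoulli_div_factorial_mul_pow {z : ℂ} (hz : ‖z‖ < 2 * π) :
    Summable fun n ↦ ‖(bernoulli n : ℂ) / n.factorial * z ^ n‖ := by
  have hr : ‖z‖ / (2 * π) < 1 := (div_lt_one (by positivity)).mpr hz
  refine ((summable_geometric_of_lt_one (by positivity) hr).mul_left 4).of_nonneg_of_le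
    (fun n ↦ norm_nonneg _) fun n ↦ ?_
  calc ‖(bernoulli n : ℂ) / n.factorial * z ^ n‖ = |(bernoulli n : ℝ)| / n.factorial * ‖z‖ ^ n := by
        simp
    _ ≤ 4 / (2 * π) ^ n * ‖z‖ ^ n := by gcongr ?_ * _; exact abs_bernoulli_div_factorial_le n
    _ = 4 * (‖z‖ / (2 * π)) ^ n := by rw [div_pow]; ring

theorem Complex.exp_ne_one_of_norm_lt {z : ℂ} (hz0 : z ≠ 0) (hz : ‖z‖ < 2 * π) :
    Complex.exp z ≠ 1 := by
  rw [Ne, Complex.exp_eq_one_iff]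
  rintro ⟨n, rfl⟩
  have hn : n ≠ 0 := by rintro rfl; simp at hz0
  have : (1 : ℝ) ≤ |(n : ℝ)| := by exact_mod_cast Int.one_le_abs hn
  rw [norm_mul, Complex.norm_intCast, norm_mul, Complex.norm_I] at hz
  simp [abs_of_pos pi_pos] at hz
  nlinarith [pi_pos]

theorem hasSum_bernoulli_div_factorial_mul_pow {z : ℂ} (hz0 : z ≠ 0) (hz : ‖z‖ < 2 * π) :
    HasSum (fun n ↦ (bernoulli n : ℂ) / n.factorial * z ^ n) (z / (Complex.exp z - 1)) := by
  have hB (n : ℕ) : PowerSeries.coeff n (bernoulliPowerSeries ℂ) * z ^ n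
      = (bernoulli n : ℂ) / n.factorial * z ^ n := by
    simp [bernoulliPowerSeries]
  have hE (n : ℕ) : PowerSeries.coeff n (PowerSeries.exp ℂ - 1) * z ^ n
      = z ^ n / n.factorial - if n = 0 then 1 else 0 := by
    rcases eq_or_ne n 0 with rfl | hn <;> simp [PowerSeries.coeff_one, *, div_eq_inv_mul]
  have hExp : HasSum (fun n ↦ PowerSeries.coeff n (PowerSeries.exp ℂ - 1) * z ^ n)
      (Complex.exp z - 1) := by
    simpa only [hE, Complex.exp_eq_exp_ℂ] using
      (NormedSpace.expSeries_div_hasSum_exp z).sub (hasSum_ite_eq 0 1)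
  have hExp_norm : Summable fun n ↦ ‖PowerSeries.coeff n (PowerSeries.exp ℂ - 1) * z ^ n‖ := by
    refine (Real.summable_pow_div_factorial ‖z‖).of_nonneg_of_le (fun n ↦ norm_nonneg _)
      fun n ↦ ?_
    rw [hE]
    rcases eq_or_ne n 0 with rfl | hn <;> simp [*]
  have hB_norm := summable_norm_bernoulli_div_factorial_mul_pow hz
  simp_rw [← hB] at hB_norm ⊢
  have hprod := PowerSeries.hasSum_coeff_mul_mul_pow hB_norm hExp_norm
  rw [bernoulliPowerSeries_mul_exp_sub_one, hExp.tsum_eq] at hprod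
  have hX : HasSum (fun n ↦ PowerSeries.coeff n (PowerSeries.X : PowerSeries ℂ) * z ^ n) z := by
    convert hasSum_ite_eq 1 z using 2 with n
    rw [PowerSeries.coeff_X]
    split_ifs with h <;> simp [h]
  rw [← eq_div_of_mul_eq (sub_ne_zero.mpr (Complex.exp_ne_one_of_norm_lt hz0 hz))
    (hX.unique hprod).symm]
  exact hB_norm.of_norm.hasSum

theorem Complex.exp_mul_I_sub_one (x : ℂ) :
    Complex.exp (x * I) - 1 = 2 * I * Complex.sin (x / 2) * Complex.exp (x / 2 * I) := by
  have hsq : Complex.exp (x * I) = Complex.exp (x / 2 * I) ^ 2 := by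
    rw [← Complex.exp_nat_mul]; ring_nf
  rw [hsq, Complex.exp_mul_I]
  linear_combination Complex.sin_sq_add_cos_sq (x / 2) - Complex.sin (x / 2) ^ 2 * I_sq

-- Also holds when `sin (s / 2) = 0`: then both sides are divisions by zero, hence `0`.
theorem re_mul_I_div_exp_mul_I_sub_one (s : ℝ) :
    (s * I / (Complex.exp (s * I) - 1)).re = s / 2 * (Real.cos (s / 2) / Real.sin (s / 2)) := by
  rw [Complex.exp_mul_I_sub_one]
  by_cases hsin : Real.sin (s / 2) = 0
  · have : Complex.sin (s / 2) = 0 := by exact_mod_cast hsin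
    simp [this, hsin]
  · have : Complex.sin (s / 2) ≠ 0 := by exact_mod_cast hsin
    have h : s * I / (2 * I * Complex.sin (s / 2) * Complex.exp (s / 2 * I))
        = (s / 2 * (Real.cos (s / 2) / Real.sin (s / 2)) : ℝ) - s / 2 * I := by
      rw [div_eq_iff (by simp [this, I_ne_zero, Complex.exp_ne_zero]), Complex.exp_mul_I]
      push_cast
      field_simp
      linear_combination -(s : ℂ) * Complex.sin_sq_add_cos_sq (s / 2)
        + s * Complex.sin (s / 2) ^ 2 * I_sq
    rw [h, Complex.sub_re, Complex.ofReal_re]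
    simp

theorem re_I_pow_two_mul (k : ℕ) : (I ^ (2 * k)).re = (-1) ^ k := by
  rw [pow_mul, I_sq, ← Complex.ofReal_one, ← Complex.ofReal_neg, ← Complex.ofReal_pow,
    Complex.ofReal_re]

theorem re_I_pow_two_mul_add_one (k : ℕ) : (I ^ (2 * k + 1)).re = 0 := by
  rw [pow_succ, Complex.mul_I_re, neg_eq_zero, pow_mul, I_sq, ← Complex.ofReal_one,
    ← Complex.ofReal_neg, ← Complex.ofReal_pow, Complex.ofReal_im]

theorem abs_bernoulli_div_factorial_mul_pow (s : ℝ) (n : ℕ) :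
    |(bernoulli n : ℝ)| / n.factorial * s ^ n = (if n = 0 then 2 else 0)
      + (if n = 1 then s / 2 else 0) - ((bernoulli n : ℂ) / n.factorial * (s * I) ^ n).re := by
  have hre : ((bernoulli n : ℂ) / n.factorial * (s * I) ^ n).re
      = bernoulli n / n.factorial * s ^ n * (I ^ n).re := by
    rw [mul_pow, ← mul_assoc]
    exact_mod_cast Complex.re_ofReal_mul _ _
  rw [hre]
  obtain ⟨k, rfl | rfl⟩ := Nat.even_or_odd' n
  · rw [re_I_pow_two_mul]
    rcases eq_or_ne k 0 with rfl | hk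
    · norm_num
    · simp only [abs_bernoulli_two_mul hk, if_neg (by omega : 2 * k ≠ 0),
        if_neg (by omega : 2 * k ≠ 1)]
      ring
  · rw [re_I_pow_two_mul_add_one]
    rcases eq_or_ne k 0 with rfl | hk
    · norm_num [bernoulli_one]
      ring
    · simp [bernoulli_eq_zero_of_odd (odd_two_mul_add_one k) (by omega : 1 < 2 * k + 1), hk]

/-- For `0 < |s| < 2π` the function
`g(s) = 2 + (s/2)(1 - cos(s/2)/sin(s/2))` equals the convergent power series
`∑_{j≥0} (|B_j|/j!) sʲ`, where `B_j` are the Bernoulli numbers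
(convention `x/(eˣ-1) = ∑ (B_j/j!) xʲ`, so `B₁ = -1/2`). -/
theorem abs_bernoulli_series_eq_g (s : ℝ) (hs : 0 < |s|) (hs2 : |s| < 2 * Real.pi) :
    HasSum (fun j : ℕ => (|(bernoulli j : ℝ)| / j.factorial) * s^j)
      (2 + (s/2) * (1 - Real.cos (s/2) / Real.sin (s/2))) := by
  have hz0 : (s : ℂ) * I ≠ 0 := mul_ne_zero (by exact_mod_cast abs_pos.mp hs) I_ne_zero
  have hz : ‖(s : ℂ) * I‖ < 2 * π := by simpa using hs2
  have hre := Complex.hasSum_re (hasSum_bernoulli_div_factorial_mul_pow hz0 hz)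
  rw [re_mul_I_div_exp_mul_I_sub_one] at hre
  rw [show 2 + s / 2 * (1 - Real.cos (s / 2) / Real.sin (s / 2))
    = 2 + s / 2 - s / 2 * (Real.cos (s / 2) / Real.sin (s / 2)) by ring]
  exact (((hasSum_ite_eq 0 2).add (hasSum_ite_eq 1 (s / 2))).sub hre).congr_fun
    (abs_bernoulli_div_factorial_mul_pow s)
end

section
/- Let m, k ≥ 1, let ι be a finite index set, and let O ∈ Matrix (Fin m × Fin k) (Fin m × Fin k) ℂ admit a decomposition O = (1_m ⊗ B₀) + ∑_{α ∈ ι} (S_α ⊗ B_α) (Kronecker products, system factor first), where B₀ and each B_α are Hermitian k×k matrices, and each S_α is a Hermitian m×m matrix with trace(S_α) = 0. Then (a) ‖B₀‖ ≤ ‖O‖, and (b) ‖∑_{α} S_α ⊗ B_α‖ ≤ 2‖O‖, where ‖·‖ denotes the operator norm. -/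
open scoped Matrix.Norms.L2Operator Kronecker

/-!
Tracing out the system factor kills every `S_α ⊗ B_α` (the `S_α` are traceless) and leaves
`m • B₀`. This partial trace is the sum of the `m` diagonal `k × k` blocks of `O`, and each block
is a compression of `O` by an isometry, hence has norm at most `‖O‖`; so `m ‖B₀‖ ≤ m ‖O‖`.
For the second bound, `C ↦ 1 ⊗ C` is a ⋆-homomorphism of C⋆-algebras, hence contractive, and
`∑ S_α ⊗ B_α = O - 1 ⊗ B₀`.
-/

namespace Matrix

section L2OpNorm

variable {𝕜 : Type*} [RCLike 𝕜] {α β γ δ : Type*} [Fintype α] [Fintype β] [DecidableEq α]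
  [DecidableEq β]

lemma l2_opNorm_one_le : ‖(1 : Matrix α α 𝕜)‖ ≤ 1 := by
  rw [← diagonal_one, l2_opNorm_diagonal]
  exact pi_norm_le_iff_of_nonneg zero_le_one |>.mpr fun _ ↦ norm_one.le

lemma l2_opNorm_one_submatrix_id_le {g : α → β} (hg : Function.Injective g) :
    ‖(1 : Matrix β β 𝕜).submatrix id g‖ ≤ 1 := by
  set P := (1 : Matrix β β 𝕜).submatrix id g
  have hP : Pᴴ * P = 1 := by
    ext i j
    simp [P, mul_apply, one_apply, hg.eq_iff]
  have hnorm := l2_opNorm_conjTranspose_mul_self P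
  rw [hP] at hnorm
  nlinarith [norm_nonneg P, l2_opNorm_one_le (𝕜 := 𝕜) (α := α)]

lemma l2_opNorm_submatrix_le [Fintype γ] [Fintype δ] [DecidableEq γ] [DecidableEq δ] (M : Matrix α β 𝕜) {f : γ → α} {g : δ → β}
    (hf : Function.Injective f) (hg : Function.Injective g) : ‖M.submatrix f g‖ ≤ ‖M‖ := by
  have hM : M.submatrix f g =
      ((1 : Matrix α α 𝕜).submatrix id f)ᴴ * M * (1 : Matrix β β 𝕜).submatrix id g := by
    ext i j
    simp [mul_apply, one_apply]
  calc ‖M.submatrix f g‖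
      ≤ ‖((1 : Matrix α α 𝕜).submatrix id f)ᴴ‖ * ‖M‖ * ‖(1 : Matrix β β 𝕜).submatrix id g‖ := by
        rw [hM]
        exact (l2_opNorm_mul _ _).trans (by gcongr; exact l2_opNorm_mul _ _)
    _ ≤ 1 * ‖M‖ * 1 := by
        rw [l2_opNorm_conjTranspose]
        gcongr
        exacts [l2_opNorm_one_submatrix_id_le hf, l2_opNorm_one_submatrix_id_le hg]
    _ = ‖M‖ := by ring

end L2OpNorm

section PartialTrace

variable {R : Type*} [CommSemiring R] {n p : Type*} [Fintype n]

def partialTraceLeft : Matrix (n × p) (n × p) R →ₗ[R] Matrix p p R where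
  toFun M := ∑ i, M.submatrix (Prod.mk i) (Prod.mk i)
  map_add' M N := by ext; simp [Matrix.sum_apply, Finset.sum_add_distrib]
  map_smul' c M := by ext; simp [Matrix.sum_apply, Finset.mul_sum]

lemma partialTraceLeft_apply (M : Matrix (n × p) (n × p) R) :
    partialTraceLeft M = ∑ i, M.submatrix (Prod.mk i) (Prod.mk i) := rfl

lemma partialTraceLeft_kronecker (A : Matrix n n R) (C : Matrix p p R) :
    partialTraceLeft (A ⊗ₖ C) = A.trace • C := by
  ext l l'
  simp [partialTraceLeft_apply, trace, Matrix.sum_apply, Finset.sum_mul]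

end PartialTrace

section PartialTraceNorm

variable {𝕜 : Type*} [RCLike 𝕜] {n p : Type*} [Fintype n] [Fintype p] [DecidableEq n]
  [DecidableEq p]

lemma l2_opNorm_partialTraceLeft_le (M : Matrix (n × p) (n × p) 𝕜) :
    ‖partialTraceLeft M‖ ≤ Fintype.card n * ‖M‖ :=
  calc ‖partialTraceLeft M‖ ≤ ∑ i : n, ‖M.submatrix (Prod.mk i) (Prod.mk i)‖ := norm_sum_le _ _
    _ ≤ ∑ _i : n, ‖M‖ := Finset.sum_le_sum fun i _ ↦
        l2_opNorm_submatrix_le M (Prod.mk_right_injective i) (Prod.mk_right_injective i)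
    _ = Fintype.card n * ‖M‖ := by simp

lemma l2_opNorm_le_of_partialTraceLeft_eq [Nonempty n] {M : Matrix (n × p) (n × p) 𝕜}
    {C : Matrix p p 𝕜} (h : partialTraceLeft M = (Fintype.card n : 𝕜) • C) : ‖C‖ ≤ ‖M‖ := by
  have hM := l2_opNorm_partialTraceLeft_le M
  rw [h, norm_smul, RCLike.norm_natCast] at hM
  exact le_of_mul_le_mul_left hM (by exact_mod_cast Fintype.card_pos)

end PartialTraceNorm

section OneKronecker

variable (n : Type*) {p : Type*} [Fintype n] [DecidableEq n] [Fintype p] [DecidableEq p]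

noncomputable def oneKroneckerStarAlgHom : Matrix p p ℂ →⋆ₐ[ℂ] Matrix (n × p) (n × p) ℂ where
  toFun C := (1 : Matrix n n ℂ) ⊗ₖ C
  map_one' := one_kronecker_one
  map_mul' C D := by rw [← mul_kronecker_mul, one_mul]
  map_zero' := kronecker_zero _
  map_add' C D := kronecker_add _ C D
  commutes' r := by simp [Algebra.algebraMap_eq_smul_one, kronecker_smul]
  map_star' C := by
    rw [star_eq_conjTranspose, star_eq_conjTranspose, conjTranspose_kronecker, conjTranspose_one]

lemma l2_opNorm_one_kronecker_le (C : Matrix p p ℂ) : ‖(1 : Matrix n n ℂ) ⊗ₖ C‖ ≤ ‖C‖ :=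
  NonUnitalStarAlgHom.norm_apply_le (oneKroneckerStarAlgHom n) C

end OneKronecker

end Matrix

theorem pure_bath_and_traceless_part_norm_bound_general
    {m k : ℕ} (hm : 1 ≤ m) {ι : Type*} [Fintype ι]
    (B₀ : Matrix (Fin k) (Fin k) ℂ)
    (S : ι → Matrix (Fin m) (Fin m) ℂ) (B : ι → Matrix (Fin k) (Fin k) ℂ)
    (hStr : ∀ α, (S α).trace = 0)
    (O : Matrix (Fin m × Fin k) (Fin m × Fin k) ℂ)
    (hO : O = (1 : Matrix (Fin m) (Fin m) ℂ) ⊗ₖ B₀ + ∑ α, S α ⊗ₖ B α) :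
    ‖B₀‖ ≤ ‖O‖ ∧ ‖∑ α, S α ⊗ₖ B α‖ ≤ 2 * ‖O‖ := by
  have : Nonempty (Fin m) := ⟨⟨0, hm⟩⟩
  have hB₀ : ‖B₀‖ ≤ ‖O‖ := Matrix.l2_opNorm_le_of_partialTraceLeft_eq <| by
    simp [hO, map_sum, Matrix.partialTraceLeft_kronecker, hStr]
  refine ⟨hB₀, ?_⟩
  calc ‖∑ α, S α ⊗ₖ B α‖ = ‖O - (1 : Matrix (Fin m) (Fin m) ℂ) ⊗ₖ B₀‖ := by
        rw [hO, add_sub_cancel_left]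
    _ ≤ ‖O‖ + ‖(1 : Matrix (Fin m) (Fin m) ℂ) ⊗ₖ B₀‖ := norm_sub_le _ _
    _ ≤ 2 * ‖O‖ := by linarith [Matrix.l2_opNorm_one_kronecker_le (Fin m) B₀]

/-- If `O = 1 ⊗ B₀ + ∑_α S_α ⊗ B_α` where `B₀` and the `B_α` are Hermitian and
the `S_α` are Hermitian and traceless, then `‖B₀‖ ≤ ‖O‖` and `‖∑_α S_α ⊗ B_α‖ ≤ 2‖O‖` in
the operator norm. -/
theorem pure_bath_and_traceless_part_norm_bound
    {m k : ℕ} (hm : 1 ≤ m) (hk : 1 ≤ k) {ι : Type*} [Fintype ι]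
    (B₀ : Matrix (Fin k) (Fin k) ℂ) (hB₀ : B₀.IsHermitian)
    (S : ι → Matrix (Fin m) (Fin m) ℂ) (B : ι → Matrix (Fin k) (Fin k) ℂ)
    (hS : ∀ α, (S α).IsHermitian) (hStr : ∀ α, (S α).trace = 0)
    (hB : ∀ α, (B α).IsHermitian)
    (O : Matrix (Fin m × Fin k) (Fin m × Fin k) ℂ)
    (hO : O = (1 : Matrix (Fin m) (Fin m) ℂ) ⊗ₖ B₀ + ∑ α, S α ⊗ₖ B α) :
    ‖B₀‖ ≤ ‖O‖ ∧ ‖∑ α, S α ⊗ₖ B α‖ ≤ 2 * ‖O‖ :=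
  pure_bath_and_traceless_part_norm_bound_general hm B₀ S B hStr O hO
end

section
/- Let A be a complex Banach algebra and A, B ∈ A. Then ‖e^A − e^B‖ ≥ 2‖A − B‖ − 2 · exp( (1/2)‖A + B‖ ) · sinh( (1/2)‖A − B‖ ). -/
/-!
Write `A = P + Q` and `B = P - Q` with `P = (A + B)/2`, `Q = (A - B)/2`. Expanding
`(P + Q)ⁿ - (P - Q)ⁿ` into words in `P` and `Q`, exactly the words with an odd number of `Q`'s
survive, each twice, so its norm is at most `(‖P‖ + ‖Q‖)ⁿ - (‖P‖ - ‖Q‖)ⁿ`. Summing these bounds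
against `1/n!` for `n ≥ 2` bounds the remainder `e^A - e^B - (A - B)` by
`e^(‖P‖+‖Q‖) - e^(‖P‖-‖Q‖) - 2‖Q‖ = 2 e^‖P‖ sinh ‖Q‖ - ‖A - B‖`, and the triangle inequality
concludes.
-/

open NormedSpace Nat

theorem norm_add_pow_sub_sub_pow_le_and_norm_add_pow_add_sub_pow_le {𝔸 : Type*} [NormedRing 𝔸]
    (P Q : 𝔸) (n : ℕ) :
    ‖(P + Q) ^ (n + 1) - (P - Q) ^ (n + 1)‖ ≤ (‖P‖ + ‖Q‖) ^ (n + 1) - (‖P‖ - ‖Q‖) ^ (n + 1) ∧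
    ‖(P + Q) ^ (n + 1) + (P - Q) ^ (n + 1)‖ ≤ (‖P‖ + ‖Q‖) ^ (n + 1) + (‖P‖ - ‖Q‖) ^ (n + 1) := by
  have norm_mul_add_mul_le (x y : 𝔸) : ‖x * P + y * Q‖ ≤ ‖x‖ * ‖P‖ + ‖y‖ * ‖Q‖ :=
    (norm_add_le _ _).trans (add_le_add (norm_mul_le _ _) (norm_mul_le _ _))
  induction n with
  | zero =>
    constructor
    · calc ‖(P + Q) ^ 1 - (P - Q) ^ 1‖ = ‖Q + Q‖ := by congr 1; noncomm_ring
        _ ≤ ‖Q‖ + ‖Q‖ := norm_add_le Q Q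
        _ = _ := by ring
    · calc ‖(P + Q) ^ 1 + (P - Q) ^ 1‖ = ‖P + P‖ := by congr 1; noncomm_ring
        _ ≤ ‖P‖ + ‖P‖ := norm_add_le P P
        _ = _ := by ring
  | succ n ih =>
    obtain ⟨hD, hS⟩ := ih
    set D := (P + Q) ^ (n + 1) - (P - Q) ^ (n + 1)
    set S := (P + Q) ^ (n + 1) + (P - Q) ^ (n + 1)
    constructor
    · calc ‖(P + Q) ^ (n + 2) - (P - Q) ^ (n + 2)‖ = ‖D * P + S * Q‖ := by
            congr 1; simp only [D, S, pow_succ _ (n + 1)]; noncomm_ring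
      _ ≤ ‖D‖ * ‖P‖ + ‖S‖ * ‖Q‖ := norm_mul_add_mul_le D S
      _ ≤ ((‖P‖ + ‖Q‖) ^ (n + 1) - (‖P‖ - ‖Q‖) ^ (n + 1)) * ‖P‖
          + ((‖P‖ + ‖Q‖) ^ (n + 1) + (‖P‖ - ‖Q‖) ^ (n + 1)) * ‖Q‖ := by gcongr
      _ = _ := by ring
    · calc ‖(P + Q) ^ (n + 2) + (P - Q) ^ (n + 2)‖ = ‖S * P + D * Q‖ := by
            congr 1; simp only [D, S, pow_succ _ (n + 1)]; noncomm_ring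
      _ ≤ ‖S‖ * ‖P‖ + ‖D‖ * ‖Q‖ := norm_mul_add_mul_le S D
      _ ≤ ((‖P‖ + ‖Q‖) ^ (n + 1) + (‖P‖ - ‖Q‖) ^ (n + 1)) * ‖P‖
          + ((‖P‖ + ‖Q‖) ^ (n + 1) - (‖P‖ - ‖Q‖) ^ (n + 1)) * ‖Q‖ := by gcongr
      _ = _ := by ring

theorem hasSum_exp_sub_exp_sub_sub (𝕂 : Type*) {𝔸 : Type*} [RCLike 𝕂] [NormedRing 𝔸]
    [NormedAlgebra 𝕂 𝔸] [CompleteSpace 𝔸] (A B : 𝔸) :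
    HasSum (fun n => ((n + 2)! : 𝕂)⁻¹ • (A ^ (n + 2) - B ^ (n + 2))) (exp A - exp B - (A - B)) := by
  have h := (exp_series_hasSum_exp' (𝕂 := 𝕂) A).sub (exp_series_hasSum_exp' (𝕂 := 𝕂) B)
  rw [← hasSum_nat_add_iff' 2] at h
  simpa [Finset.sum_range_succ, smul_sub, sub_sub, add_comm, add_left_comm] using h

/-- `exp` does not depend on `𝕂`; a `𝕂`-algebra structure only provides the exponential series
with coefficients of norm `1/n!`. -/
theorem norm_exp_add_sub_exp_sub_sub_le (𝕂 : Type*) {𝔸 : Type*} [RCLike 𝕂] [NormedRing 𝔸]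
    [NormedAlgebra 𝕂 𝔸] [CompleteSpace 𝔸] (P Q : 𝔸) :
    ‖exp (P + Q) - exp (P - Q) - (P + Q - (P - Q))‖ ≤
      Real.exp (‖P‖ + ‖Q‖) - Real.exp (‖P‖ - ‖Q‖) - (‖P‖ + ‖Q‖ - (‖P‖ - ‖Q‖)) := by
  have hreal := hasSum_exp_sub_exp_sub_sub ℝ (‖P‖ + ‖Q‖) (‖P‖ - ‖Q‖)
  simp only [← Real.exp_eq_exp_ℝ] at hreal
  refine (hasSum_exp_sub_exp_sub_sub 𝕂 (P + Q) (P - Q)).norm_le_of_bounded hreal fun n => ?_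
  rw [norm_smul, norm_inv, RCLike.norm_natCast, smul_eq_mul]
  gcongr
  exact (norm_add_pow_sub_sub_pow_le_and_norm_add_pow_add_sub_pow_le P Q (n + 1)).1

/-- In a complex Banach algebra,
`‖e^A - e^B‖ ≥ 2‖A - B‖ - 2 exp(‖A+B‖/2) sinh(‖A-B‖/2)`. -/
theorem norm_exp_sub_exp_lower_bound
    {𝔸 : Type*} [NormedRing 𝔸] [NormedAlgebra ℂ 𝔸] [CompleteSpace 𝔸] (A B : 𝔸) :
    2 * ‖A - B‖ - 2 * Real.exp (‖A + B‖ / 2) * Real.sinh (‖A - B‖ / 2)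
      ≤ ‖NormedSpace.exp A - NormedSpace.exp B‖ := by
  set P : 𝔸 := (2⁻¹ : ℂ) • (A + B)
  set Q : 𝔸 := (2⁻¹ : ℂ) • (A - B)
  have hA : P + Q = A := by module
  have hB : P - Q = B := by module
  have hP : ‖P‖ = ‖A + B‖ / 2 := by rw [norm_smul, norm_inv, Complex.norm_ofNat, inv_mul_eq_div]
  have hQ : ‖Q‖ = ‖A - B‖ / 2 := by rw [norm_smul, norm_inv, Complex.norm_ofNat, inv_mul_eq_div]
  have hsinh :
      Real.exp (‖P‖ + ‖Q‖) - Real.exp (‖P‖ - ‖Q‖) = 2 * Real.exp ‖P‖ * Real.sinh ‖Q‖ := by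
    rw [Real.sinh_eq, Real.exp_add, Real.exp_sub, Real.exp_neg]
    field_simp
  have hremainder := norm_exp_add_sub_exp_sub_sub_le ℂ P Q
  rw [hsinh, hA, hB, hP, hQ] at hremainder
  linarith [norm_le_norm_add_norm_sub (exp A - exp B) (A - B)]
end

section
/- Let A be a complex Banach algebra, let A, B ∈ A, and set N := (A + B)/2 and M := (A − B)/2. Then for every n ≥ 1, ‖Aⁿ − Bⁿ‖ ≤ (‖N‖ + ‖M‖)ⁿ − (‖N‖ − ‖M‖)ⁿ. -/
/-!
Write `A = N + M` and `B = N - M`. Since `Aⁿ⁺¹ ∓ Bⁿ⁺¹ = (Aⁿ ∓ Bⁿ) N + (Aⁿ ± Bⁿ) M`, the norms of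
`Aⁿ - Bⁿ` and `Aⁿ + Bⁿ` are bounded simultaneously by induction, by the two real sequences
`(‖N‖ + ‖M‖)ⁿ ∓ (‖N‖ - ‖M‖)ⁿ`, which satisfy the same recursion.
-/

section

variable {R : Type*}

theorem add_pow_succ_sub_sub_pow_succ [Ring R] (x y : R) (n : ℕ) :
    (x + y) ^ (n + 1) - (x - y) ^ (n + 1)
      = ((x + y) ^ n - (x - y) ^ n) * x + ((x + y) ^ n + (x - y) ^ n) * y := by
  rw [pow_succ, pow_succ]
  noncomm_ring

theorem add_pow_succ_add_sub_pow_succ [Ring R] (x y : R) (n : ℕ) :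
    (x + y) ^ (n + 1) + (x - y) ^ (n + 1)
      = ((x + y) ^ n + (x - y) ^ n) * x + ((x + y) ^ n - (x - y) ^ n) * y := by
  rw [pow_succ, pow_succ]
  noncomm_ring

theorem norm_mul_add_mul_le [NonUnitalSeminormedRing R] {p q : R} {s t : ℝ}
    (hp : ‖p‖ ≤ s) (hq : ‖q‖ ≤ t) (x y : R) :
    ‖p * x + q * y‖ ≤ s * ‖x‖ + t * ‖y‖ :=
  calc ‖p * x + q * y‖ ≤ ‖p‖ * ‖x‖ + ‖q‖ * ‖y‖ :=
        (norm_add_le _ _).trans (add_le_add (norm_mul_le _ _) (norm_mul_le _ _))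
    _ ≤ s * ‖x‖ + t * ‖y‖ := by gcongr

variable [NormedRing R] (x y : R)

/-- Exponents start at `1`: at `0` the second bound would say `‖1 + 1‖ ≤ 2`, which fails when
`‖1‖ > 1`. -/
theorem norm_add_pow_succ_sub_and_add_sub_pow_succ_le (n : ℕ) :
    ‖(x + y) ^ (n + 1) - (x - y) ^ (n + 1)‖
        ≤ (‖x‖ + ‖y‖) ^ (n + 1) - (‖x‖ - ‖y‖) ^ (n + 1) ∧
      ‖(x + y) ^ (n + 1) + (x - y) ^ (n + 1)‖
        ≤ (‖x‖ + ‖y‖) ^ (n + 1) + (‖x‖ - ‖y‖) ^ (n + 1) := by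
  induction n with
  | zero =>
    constructor
    · calc ‖(x + y) ^ 1 - (x - y) ^ 1‖ = ‖y + y‖ := by congr 1; noncomm_ring
        _ ≤ ‖y‖ + ‖y‖ := norm_add_le _ _
        _ = _ := by ring
    · calc ‖(x + y) ^ 1 + (x - y) ^ 1‖ = ‖x + x‖ := by congr 1; noncomm_ring
        _ ≤ ‖x‖ + ‖x‖ := norm_add_le _ _
        _ = _ := by ring
  | succ n ih =>
    obtain ⟨h_sub, h_add⟩ := ih
    constructor
    · rw [add_pow_succ_sub_sub_pow_succ]
      exact (norm_mul_add_mul_le h_sub h_add x y).trans_eq (by ring)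
    · rw [add_pow_succ_add_sub_pow_succ]
      exact (norm_mul_add_mul_le h_add h_sub x y).trans_eq (by ring)

theorem norm_add_pow_sub_sub_pow_le (n : ℕ) :
    ‖(x + y) ^ n - (x - y) ^ n‖ ≤ (‖x‖ + ‖y‖) ^ n - (‖x‖ - ‖y‖) ^ n := by
  cases n with
  | zero => simp
  | succ n => exact (norm_add_pow_succ_sub_and_add_sub_pow_succ_le x y n).1

end

theorem norm_pow_sub_pow_le_general
    {𝔸 : Type*} [NormedRing 𝔸] [NormedAlgebra ℂ 𝔸] (A B : 𝔸) (n : ℕ) :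
    ‖A^n - B^n‖
      ≤ (‖(1/2 : ℂ) • (A + B)‖ + ‖(1/2 : ℂ) • (A - B)‖)^n
        - (‖(1/2 : ℂ) • (A + B)‖ - ‖(1/2 : ℂ) • (A - B)‖)^n := by
  have hA : (1/2 : ℂ) • (A + B) + (1/2 : ℂ) • (A - B) = A := by module
  have hB : (1/2 : ℂ) • (A + B) - (1/2 : ℂ) • (A - B) = B := by module
  simpa only [hA, hB] using
    norm_add_pow_sub_sub_pow_le ((1/2 : ℂ) • (A + B)) ((1/2 : ℂ) • (A - B)) n

/-- In a complex Banach algebra, with `N = (A+B)/2` and `M = (A-B)/2`,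
`‖Aⁿ - Bⁿ‖ ≤ (‖N‖ + ‖M‖)ⁿ - (‖N‖ - ‖M‖)ⁿ` for every `n ≥ 1`. -/
theorem norm_pow_sub_pow_le
    {𝔸 : Type*} [NormedRing 𝔸] [NormedAlgebra ℂ 𝔸] (A B : 𝔸) (n : ℕ) (hn : 1 ≤ n) :
    ‖A^n - B^n‖
      ≤ (‖(1/2 : ℂ) • (A + B)‖ + ‖(1/2 : ℂ) • (A - B)‖)^n
        - (‖(1/2 : ℂ) • (A + B)‖ - ‖(1/2 : ℂ) • (A - B)‖)^n :=
  norm_pow_sub_pow_le_general A B n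
end

section
/- Let A be a complex Banach algebra and A, B ∈ A, and suppose ‖A + B‖ ≤ ε₊ and ‖A − B‖ ≤ ε₋ with ε₋ > 0. If 2 − exp(ε₊/2) · sinh(ε₋/2)/(ε₋/2) > 0, then ‖A − B‖ ≤ c(ε₊, ε₋) · ‖e^A − e^B‖, where c(ε₊, ε₋) := ( 2 − exp(ε₊/2) · sinh(ε₋/2)/(ε₋/2) )^{−1}. -/
/-!
Expand `e^A - e^B` as `∑ (Aⁿ - Bⁿ) / n!`. The term `n = 1` is `A - B`; for the others, the
recursion `2 (Aⁿ⁺¹ ∓ Bⁿ⁺¹) = (Aⁿ ∓ Bⁿ)(A + B) + (Aⁿ ± Bⁿ)(A - B)` gives `‖Aⁿ - Bⁿ‖ ≤ uⁿ - vⁿ`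
with `u, v = ‖A + B‖/2 ± ‖A - B‖/2`. So the tail is at most `e^u - e^v - (u - v)
= 2 e^{‖A+B‖/2} sinh (‖A-B‖/2) - ‖A - B‖`, whence
`‖e^A - e^B‖ ≥ 2‖A - B‖ - 2 e^{‖A+B‖/2} sinh (‖A-B‖/2)`. Since `sinh x / x` increases
(`sinh` is convex with `sinh 0 = 0`), `sinh (‖A-B‖/2) ≤ (sinh (ε₋/2) / (ε₋/2)) ‖A - B‖/2`.
-/

open Nat Real

namespace Real

theorem convexOn_sinh : ConvexOn ℝ (Set.Ici 0) sinh := by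
  refine MonotoneOn.convexOn_of_deriv (convex_Ici 0) continuous_sinh.continuousOn
    differentiable_sinh.differentiableOn ?_
  rw [deriv_sinh, interior_Ici]
  exact cosh_strictMonoOn.monotoneOn.mono Set.Ioi_subset_Ici_self

theorem sinh_le_sinh_div_mul {x y : ℝ} (hx : 0 ≤ x) (hxy : x ≤ y) :
    sinh x ≤ sinh y / y * x := by
  rcases hx.eq_or_lt with rfl | hx
  · simp
  have h := convexOn_sinh.secant_mono (a := 0) Set.self_mem_Ici (Set.mem_Ici.2 hx.le)
    (Set.mem_Ici.2 (hx.le.trans hxy)) hx.ne' (hx.trans_le hxy).ne' hxy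
  simp only [sinh_zero, sub_zero] at h
  rwa [div_le_iff₀ hx] at h

theorem exp_add_sub_exp_sub (x y : ℝ) : exp (x + y) - exp (x - y) = 2 * exp x * sinh y := by
  rw [sinh_eq, exp_add, exp_sub, div_eq_mul_inv, ← exp_neg]
  ring

theorem hasSum_pow_sub_pow_div_factorial (u v : ℝ) :
    HasSum (fun n => (u ^ n - v ^ n) / n !) (exp u - exp v) := by
  have h := (NormedSpace.exp_series_hasSum_exp' (𝕂 := ℝ) u).sub
    (NormedSpace.exp_series_hasSum_exp' (𝕂 := ℝ) v)
  simpa [div_eq_inv_mul, mul_sub, exp_eq_exp_ℝ] using h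

end Real

section NormedRing

variable {𝔸 : Type*} [NormedRing 𝔸]

section Powers

variable [NormedSpace ℝ 𝔸] {A B : 𝔸} {u v : ℝ}

theorem norm_pow_succ_sub_and_add_pow_succ_le
    (hs : ‖A + B‖ = u + v) (hd : ‖A - B‖ = u - v) (n : ℕ) :
    ‖A ^ (n + 1) - B ^ (n + 1)‖ ≤ u ^ (n + 1) - v ^ (n + 1) ∧
      ‖A ^ (n + 1) + B ^ (n + 1)‖ ≤ u ^ (n + 1) + v ^ (n + 1) := by
  induction n with
  | zero => constructor <;> simp only [zero_add, pow_one] <;> linarith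
  | succ n ih =>
    obtain ⟨ih_sub, ih_add⟩ := ih
    have bound (P Q : 𝔸) (p q : ℝ) (hP : ‖P‖ ≤ p) (hQ : ‖Q‖ ≤ q) :
        ‖P * (A + B) + Q * (A - B)‖ ≤ p * (u + v) + q * (u - v) :=
      calc _ ≤ ‖P‖ * ‖A + B‖ + ‖Q‖ * ‖A - B‖ :=
            (norm_add_le _ _).trans (add_le_add (norm_mul_le _ _) (norm_mul_le _ _))
        _ ≤ p * ‖A + B‖ + q * ‖A - B‖ := by gcongr
        _ = p * (u + v) + q * (u - v) := by rw [hs, hd]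
    have h_sub : (2 : ℝ) • (A ^ (n + 2) - B ^ (n + 2)) =
        (A ^ (n + 1) - B ^ (n + 1)) * (A + B) + (A ^ (n + 1) + B ^ (n + 1)) * (A - B) := by
      simp only [two_smul, pow_succ _ (n + 1), mul_add, add_mul, mul_sub, sub_mul]
      abel
    have h_add : (2 : ℝ) • (A ^ (n + 2) + B ^ (n + 2)) =
        (A ^ (n + 1) + B ^ (n + 1)) * (A + B) + (A ^ (n + 1) - B ^ (n + 1)) * (A - B) := by
      simp only [two_smul, pow_succ _ (n + 1), mul_add, add_mul, mul_sub, sub_mul]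
      abel
    have b_sub := bound _ _ _ _ ih_sub ih_add
    have b_add := bound _ _ _ _ ih_add ih_sub
    rw [← h_sub, norm_smul, Real.norm_two] at b_sub
    rw [← h_add, norm_smul, Real.norm_two] at b_add
    constructor <;> linarith [show u ^ (n + 2) = u ^ (n + 1) * u from pow_succ _ _,
      show v ^ (n + 2) = v ^ (n + 1) * v from pow_succ _ _]

theorem norm_pow_sub_pow_le_s16 (hs : ‖A + B‖ = u + v) (hd : ‖A - B‖ = u - v) (n : ℕ) :
    ‖A ^ n - B ^ n‖ ≤ u ^ n - v ^ n := by
  cases n with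
  | zero => simp
  | succ n => exact (norm_pow_succ_sub_and_add_pow_succ_le hs hd n).1

end Powers

variable [NormedAlgebra ℝ 𝔸] [CompleteSpace 𝔸]

theorem norm_exp_sub_exp_sub_sub_le (A B : 𝔸) :
    ‖NormedSpace.exp A - NormedSpace.exp B - (A - B)‖ ≤
      2 * exp (‖A + B‖ / 2) * sinh (‖A - B‖ / 2) - ‖A - B‖ := by
  set u := ‖A + B‖ / 2 + ‖A - B‖ / 2
  set v := ‖A + B‖ / 2 - ‖A - B‖ / 2
  have hs : ‖A + B‖ = u + v := by ring
  have hd : ‖A - B‖ = u - v := by ring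
  have h_tail := (hasSum_nat_add_iff' 2).2 ((NormedSpace.exp_series_hasSum_exp' (𝕂 := ℝ) A).sub
    (NormedSpace.exp_series_hasSum_exp' (𝕂 := ℝ) B))
  have h_tail_real := (hasSum_nat_add_iff' 2).2 (hasSum_pow_sub_pow_div_factorial u v)
  simp only [Finset.sum_sub_distrib, Finset.sum_range_succ, Finset.range_one,
    Finset.sum_singleton, factorial_zero, factorial_one, cast_one, inv_one, pow_zero, pow_one,
    one_smul, div_one, sub_self, zero_add, add_sub_add_left_eq_sub] at h_tail h_tail_real
  calc _ ≤ exp u - exp v - (u - v) := h_tail.norm_le_of_bounded h_tail_real fun n => by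
        rw [← smul_sub, norm_smul, norm_inv, RCLike.norm_natCast, div_eq_inv_mul]
        gcongr
        exact norm_pow_sub_pow_le_s16 hs hd _
    _ = _ := by rw [exp_add_sub_exp_sub, ← hd]

theorem two_mul_norm_sub_sub_le_norm_exp_sub_exp (A B : 𝔸) :
    2 * ‖A - B‖ - 2 * exp (‖A + B‖ / 2) * sinh (‖A - B‖ / 2) ≤
      ‖NormedSpace.exp A - NormedSpace.exp B‖ := by
  have h_tail := norm_exp_sub_exp_sub_sub_le A B
  have h_triangle := norm_sub_le (NormedSpace.exp A - NormedSpace.exp B)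
    (NormedSpace.exp A - NormedSpace.exp B - (A - B))
  rw [sub_sub_cancel] at h_triangle
  linarith

end NormedRing

theorem norm_sub_le_of_norm_exp_sub_exp_general
    {𝔸 : Type*} [NormedRing 𝔸] [NormedAlgebra ℂ 𝔸] [CompleteSpace 𝔸]
    (A B : 𝔸) (εp εm : ℝ)
    (h₁ : ‖A + B‖ ≤ εp) (h₂ : ‖A - B‖ ≤ εm)
    (hpos : 0 < 2 - Real.exp (εp/2) * (Real.sinh (εm/2) / (εm/2))) :
    ‖A - B‖ ≤ (2 - Real.exp (εp/2) * (Real.sinh (εm/2) / (εm/2)))⁻¹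
        * ‖NormedSpace.exp A - NormedSpace.exp B‖ := by
  have h_sinh_nonneg : 0 ≤ sinh (‖A - B‖ / 2) := sinh_nonneg_iff.2 (by positivity)
  have h_sinh : sinh (‖A - B‖ / 2) ≤ sinh (εm / 2) / (εm / 2) * (‖A - B‖ / 2) :=
    sinh_le_sinh_div_mul (by positivity) (by linarith)
  have h_exp : exp (‖A + B‖ / 2) ≤ exp (εp / 2) := exp_le_exp.2 (by linarith)
  have h_cross : 2 * exp (‖A + B‖ / 2) * sinh (‖A - B‖ / 2) ≤
      exp (εp / 2) * (sinh (εm / 2) / (εm / 2)) * ‖A - B‖ :=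
    calc _ ≤ 2 * exp (εp / 2) * (sinh (εm / 2) / (εm / 2) * (‖A - B‖ / 2)) := by gcongr
      _ = _ := by ring
  rw [le_inv_mul_iff₀ hpos]
  linarith [two_mul_norm_sub_sub_le_norm_exp_sub_exp A B]

/-- If `‖A + B‖ ≤ ε₊` and `‖A - B‖ ≤ ε₋` with `ε₋ > 0`, and
`2 - exp(ε₊/2) sinh(ε₋/2)/(ε₋/2) > 0`, then
`‖A - B‖ ≤ (2 - exp(ε₊/2) sinh(ε₋/2)/(ε₋/2))⁻¹ ‖e^A - e^B‖`. -/
theorem norm_sub_le_of_norm_exp_sub_exp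
    {𝔸 : Type*} [NormedRing 𝔸] [NormedAlgebra ℂ 𝔸] [CompleteSpace 𝔸]
    (A B : 𝔸) (εp εm : ℝ) (hεm : 0 < εm)
    (h₁ : ‖A + B‖ ≤ εp) (h₂ : ‖A - B‖ ≤ εm)
    (hpos : 0 < 2 - Real.exp (εp/2) * (Real.sinh (εm/2) / (εm/2))) :
    ‖A - B‖ ≤ (2 - Real.exp (εp/2) * (Real.sinh (εm/2) / (εm/2)))⁻¹
        * ‖NormedSpace.exp A - NormedSpace.exp B‖ :=
  norm_sub_le_of_norm_exp_sub_exp_general A B εp εm h₁ h₂ hpos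
end

section
/- Let H̃ : [0,T] → Matrix n n ℂ be continuous with H̃(t) Hermitian and ‖H̃(t)‖ ≤ J for all t ∈ [0,T], and let Ũ : [0,T] → Matrix n n ℂ solve Ũ′(t) = −i H̃(t) Ũ(t) with Ũ(0) = 1. Then for every unit vector ψ ∈ ℂⁿ: ‖(Ũ(T) − 1)ψ‖² ≤ ‖( ∫_0^T H̃(t) dt ) ψ‖² + 2( e^{JT} − 1 − JT − (JT)²/2 ). Equivalently, ⟨ψ, (2·1 − Ũ(T) − Ũ(T)†) ψ⟩ ≤ ∫_0^T ∫_0^T ⟨ψ, H̃(t₁) H̃(t₂) ψ⟩ dt₁ dt₂ + 2( e^{JT} − 1 − JT − (JT)²/2 ). -/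
/-!
Write `ψ = u 0`, `p t = ∫₀ᵗ A s ψ ds` and `w = u - ψ + i p` for the remainder after first order,
where `u = Ũ ψ` solves `u' = -i A u` with `A = H̃` self-adjoint and `‖A‖ ≤ J`. Self-adjointness
keeps `‖u t‖ = ‖ψ‖ = 1`, whence `‖u t - ψ‖ ≤ J t`, `‖w t‖ ≤ (J t)² / 2` and
`‖u T - ψ‖² = -2 Re ⟪ψ, u T - ψ⟫`. The first-order terms cancel in the derivative of
`2 Re ⟪ψ, u - ψ⟫ + ‖p‖²` because `⟪A ψ, ψ⟫` is real, leaving `2 Re ⟪A ψ, -i w⟫`; so this quantity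
is at most `(J T)³ / 3 ≤ 2 (e^{JT} - 1 - JT - (JT)² / 2)` in absolute value.
-/

open scoped Matrix.Norms.L2Operator
open Set Complex

section MatrixToEuclidean

variable {n : Type*} [Fintype n] [DecidableEq n]

noncomputable def Matrix.toEuclideanCLMEval (ψ : EuclideanSpace ℂ n) :
    Matrix n n ℂ →L[ℂ] EuclideanSpace ℂ n :=
  (ContinuousLinearMap.apply ℂ _ ψ).comp
    (LinearMap.toContinuousLinearMap
      (Matrix.toEuclideanCLM (n := n) (𝕜 := ℂ)).toAlgEquiv.toLinearMap)

theorem Matrix.hasDerivAt_toEuclideanCLM_apply {U : ℝ → Matrix n n ℂ} {U' : Matrix n n ℂ} {t : ℝ}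
    (h : HasDerivAt U U' t) (ψ : EuclideanSpace ℂ n) :
    HasDerivAt (fun s => toEuclideanCLM (n := n) (𝕜 := ℂ) (U s) ψ)
      (toEuclideanCLM (n := n) (𝕜 := ℂ) U' ψ) t :=
  ((toEuclideanCLMEval ψ).restrictScalars ℝ).hasFDerivAt.comp_hasDerivAt t h

theorem Matrix.toEuclideanCLM_intervalIntegral_apply {H : ℝ → Matrix n n ℂ} {a b : ℝ}
    (hH : IntervalIntegrable H MeasureTheory.volume a b) (ψ : EuclideanSpace ℂ n) :
    toEuclideanCLM (n := n) (𝕜 := ℂ) (∫ t in a..b, H t) ψ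
      = ∫ t in a..b, toEuclideanCLM (n := n) (𝕜 := ℂ) (H t) ψ :=
  ((toEuclideanCLMEval ψ).intervalIntegral_comp_comm hH).symm

theorem Matrix.isometry_toEuclideanCLM : Isometry (toEuclideanCLM (n := n) (𝕜 := ℂ)) :=
  AddMonoidHomClass.isometry_of_norm _ fun _ => rfl

end MatrixToEuclidean

theorem Real.cube_div_six_le_exp_sub_quadratic {x : ℝ} (hx : 0 ≤ x) :
    x ^ 3 / 6 ≤ Real.exp x - 1 - x - x ^ 2 / 2 := by
  have h := Real.sum_le_exp_of_nonneg hx 4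
  norm_num [Finset.sum_range_succ, Nat.factorial] at h
  linarith

theorem image_norm_le_of_norm_deriv_le_deriv_boundary {F : Type*} [NormedAddCommGroup F]
    [NormedSpace ℝ F] {f f' : ℝ → F} {B B' : ℝ → ℝ} {a b : ℝ}
    (hf : ∀ x ∈ Icc a b, HasDerivAt f (f' x) x) (ha : ‖f a‖ ≤ B a)
    (hB : ∀ x, HasDerivAt B (B' x) x) (bound : ∀ x ∈ Icc a b, ‖f' x‖ ≤ B' x) :
    ∀ x ∈ Icc a b, ‖f x‖ ≤ B x :=
  image_norm_le_of_norm_deriv_right_le_deriv_boundary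
    (fun x hx => (hf x hx).continuousAt.continuousWithinAt)
    (fun x hx => (hf x (Ico_subset_Icc_self hx)).hasDerivWithinAt) ha hB
    (fun x hx => bound x (Ico_subset_Icc_self hx))

section Schrodinger

variable {E : Type*} [NormedAddCommGroup E] [InnerProductSpace ℂ E] [CompleteSpace E]
  {A : ℝ → E →L[ℂ] E} {u : ℝ → E} {T J : ℝ}

theorem norm_eq_of_hasDerivAt_neg_I_smul (hA : ∀ t ∈ Icc 0 T, IsSelfAdjoint (A t))
    (hu : ∀ t ∈ Icc 0 T, HasDerivAt u (-I • A t (u t)) t) :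
    ∀ t ∈ Icc 0 T, ‖u t‖ = ‖u 0‖ := by
  have hderiv : ∀ t ∈ Icc 0 T, HasDerivAt (fun s => inner ℂ (u s) (u s)) (0 : ℂ) t := by
    intro t ht
    refine ((hu t ht).inner ℂ (hu t ht)).congr_deriv ?_
    have hsym : inner ℂ (A t (u t)) (u t) = inner ℂ (u t) (A t (u t)) :=
      (hA t ht).isSymmetric _ _
    rw [inner_smul_left, inner_smul_right, hsym]
    simp
  have hconst := constant_of_has_deriv_right_zero
    (fun t ht => (hderiv t ht).continuousAt.continuousWithinAt)
    (fun t ht => (hderiv t (Ico_subset_Icc_self ht)).hasDerivWithinAt)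
  intro t ht
  have h := hconst t ht
  rw [← pow_left_inj₀ (norm_nonneg _) (norm_nonneg _) two_ne_zero, ← inner_self_eq_norm_sq (𝕜 := ℂ),
    ← inner_self_eq_norm_sq (𝕜 := ℂ), h]

theorem norm_sub_le_of_hasDerivAt_neg_I_smul (hA : ∀ t ∈ Icc 0 T, IsSelfAdjoint (A t))
    (hAJ : ∀ t ∈ Icc 0 T, ‖A t‖ ≤ J) (hu : ∀ t ∈ Icc 0 T, HasDerivAt u (-I • A t (u t)) t) :
    ∀ t ∈ Icc 0 T, ‖u t - u 0‖ ≤ J * t * ‖u 0‖ := by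
  refine image_norm_le_of_norm_deriv_le_deriv_boundary (B' := fun _ => J * ‖u 0‖)
    (fun t ht => (hu t ht).sub_const (u 0)) (by simp)
    (fun t => (((hasDerivAt_id t).const_mul J).mul_const ‖u 0‖).congr_deriv (by ring))
    (fun t ht => ?_)
  rw [norm_smul, norm_neg, norm_I, one_mul, ← norm_eq_of_hasDerivAt_neg_I_smul hA hu t ht]
  exact (A t).le_of_opNorm_le (hAJ t ht) _

theorem norm_sub_add_I_smul_integral_le (hAc : Continuous A)
    (hA : ∀ t ∈ Icc 0 T, IsSelfAdjoint (A t)) (hAJ : ∀ t ∈ Icc 0 T, ‖A t‖ ≤ J) (hJ : 0 ≤ J)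
    (hu : ∀ t ∈ Icc 0 T, HasDerivAt u (-I • A t (u t)) t) :
    ∀ t ∈ Icc 0 T, ‖u t - u 0 + I • ∫ s in 0..t, A s (u 0)‖ ≤ (J * t) ^ 2 / 2 * ‖u 0‖ := by
  have hp (t : ℝ) : HasDerivAt (fun t => ∫ s in 0..t, A s (u 0)) (A t (u 0)) t :=
    ((hAc.clm_apply continuous_const).integral_hasStrictDerivAt 0 t).hasDerivAt
  refine image_norm_le_of_norm_deriv_le_deriv_boundary (B' := fun t => J ^ 2 * t * ‖u 0‖)
    (f' := fun t => -I • A t (u t - u 0))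
    (fun t ht => (((hu t ht).sub_const (u 0)).add ((hp t).const_smul I)).congr_deriv ?_)
    (by simp) (fun t => ?_) (fun t ht => ?_)
  · rw [map_sub, smul_sub, neg_smul, neg_smul, sub_neg_eq_add]
  · exact ((((hasDerivAt_id t).const_mul J).pow 2).div_const 2 |>.mul_const ‖u 0‖).congr_deriv
      (by simp only [id, Nat.cast_ofNat]; ring)
  · rw [norm_smul, norm_neg, norm_I, one_mul]
    calc ‖A t (u t - u 0)‖ ≤ J * ‖u t - u 0‖ := (A t).le_of_opNorm_le (hAJ t ht) _
      _ ≤ J * (J * t * ‖u 0‖) :=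
        mul_le_mul_of_nonneg_left (norm_sub_le_of_hasDerivAt_neg_I_smul hA hAJ hu t ht) hJ
      _ = J ^ 2 * t * ‖u 0‖ := by ring

theorem abs_two_mul_re_inner_add_norm_integral_sq_le (hAc : Continuous A)
    (hA : ∀ t ∈ Icc 0 T, IsSelfAdjoint (A t)) (hAJ : ∀ t ∈ Icc 0 T, ‖A t‖ ≤ J) (hJ : 0 ≤ J)
    (hu : ∀ t ∈ Icc 0 T, HasDerivAt u (-I • A t (u t)) t) :
    ∀ t ∈ Icc 0 T, |2 * (inner ℂ (u 0) (u t - u 0)).re + ‖∫ s in 0..t, A s (u 0)‖ ^ 2|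
      ≤ (J * t) ^ 3 / 3 * ‖u 0‖ ^ 2 := by
  set ψ := u 0
  set p := fun t => ∫ s in 0..t, A s ψ
  have hp (t : ℝ) : HasDerivAt p (A t ψ) t :=
    ((hAc.clm_apply continuous_const).integral_hasStrictDerivAt 0 t).hasDerivAt
  have hf (t : ℝ) (ht : t ∈ Icc 0 T) :
      HasDerivAt (fun t => 2 * (inner ℂ ψ (u t - ψ)).re + ‖p t‖ ^ 2)
        (2 * (inner ℂ (A t ψ) (-I • (u t - ψ + I • p t))).re) t := by
    have h := ((hasDerivAt_const t ψ).inner ℂ ((hu t ht).sub_const ψ)).const_mul 2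
      |>.add ((hp t).inner ℂ (hp t))
    refine ((Complex.reCLM.hasFDerivAt.comp_hasDerivAt t h).congr_deriv ?_).congr_of_eventuallyEq
      (Filter.Eventually.of_forall fun s => ?_)
    · have hsym : inner ℂ ψ (A t (u t)) = inner ℂ (A t ψ) (u t) :=
        ((hA t ht).isSymmetric ψ (u t)).symm
      have hreal : (inner ℂ (A t ψ) ψ).im = 0 := (hA t ht).isSymmetric.im_inner_apply_self ψ
      have hswap : (inner ℂ (p t) (A t ψ)).re = (inner ℂ (A t ψ) (p t)).re := by
        rw [← inner_conj_symm]; exact conj_re _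
      simp only [reCLM_apply, inner_smul_right, inner_zero_left, inner_add_right, inner_sub_right,
        hsym, add_re, sub_re, mul_re, neg_re, neg_im, I_re, I_im, hswap, hreal, sub_im, add_im,
        mul_im, re_ofNat, im_ofNat]
      ring
    · simp only [Function.comp_apply, Pi.add_apply, reCLM_apply, add_re, mul_re, re_ofNat, im_ofNat,
        zero_mul, sub_zero, ← inner_self_eq_norm_sq (𝕜 := ℂ) (p s), RCLike.re_to_complex]
  refine image_norm_le_of_norm_deriv_le_deriv_boundary (B' := fun t => J ^ 3 * t ^ 2 * ‖ψ‖ ^ 2) hf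
    (by simp [p, ψ]) (fun t => ?_) (fun t ht => ?_)
  · exact ((((hasDerivAt_id t).const_mul J).pow 3).div_const 3 |>.mul_const (‖ψ‖ ^ 2)).congr_deriv
      (by simp only [id, Nat.cast_ofNat]; ring)
  · rw [Real.norm_eq_abs, abs_mul, abs_two]
    calc 2 * |(inner ℂ (A t ψ) (-I • (u t - ψ + I • p t))).re|
        ≤ 2 * (‖A t ψ‖ * ‖-I • (u t - ψ + I • p t)‖) := by
          gcongr
          exact (Complex.abs_re_le_norm _).trans (norm_inner_le_norm _ _)
      _ = 2 * (‖A t ψ‖ * ‖u t - ψ + I • p t‖) := by rw [norm_smul, norm_neg, norm_I, one_mul]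
      _ ≤ 2 * (J * ‖ψ‖ * ((J * t) ^ 2 / 2 * ‖ψ‖)) := by
          gcongr
          · exact (A t).le_of_opNorm_le (hAJ t ht) _
          · exact norm_sub_add_I_smul_integral_le hAc hA hAJ hJ hu t ht
      _ = J ^ 3 * t ^ 2 * ‖ψ‖ ^ 2 := by ring

theorem norm_sub_sq_le_norm_integral_sq_add (hAc : Continuous A)
    (hA : ∀ t ∈ Icc 0 T, IsSelfAdjoint (A t)) (hAJ : ∀ t ∈ Icc 0 T, ‖A t‖ ≤ J) (hJ : 0 ≤ J)
    (hT : 0 ≤ T) (hu : ∀ t ∈ Icc 0 T, HasDerivAt u (-I • A t (u t)) t) :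
    ‖u T - u 0‖ ^ 2 ≤ ‖∫ t in 0..T, A t (u 0)‖ ^ 2 + (J * T) ^ 3 / 3 * ‖u 0‖ ^ 2 := by
  have hT' : T ∈ Icc 0 T := right_mem_Icc.2 hT
  have hsq : ‖u T - u 0‖ ^ 2 = -(2 * (inner ℂ (u 0) (u T - u 0)).re) := by
    rw [@norm_sub_sq ℂ, norm_eq_of_hasDerivAt_neg_I_smul hA hu T hT', inner_sub_right, sub_re,
      inner_re_symm, ← RCLike.re_to_complex (x := inner ℂ (u 0) (u 0)), inner_self_eq_norm_sq,
      RCLike.re_to_complex]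
    ring
  have hbound := abs_le.1 (abs_two_mul_re_inner_add_norm_integral_sq_le hAc hA hAJ hJ hu T hT')
  linarith [hbound.1]

end Schrodinger

/-- Lowest-order Dyson bound on the deviation of the evolution from the identity.
If `Ũ' = -i H̃ Ũ`, `Ũ(0) = 1`, with `H̃` continuous, Hermitian and `‖H̃ t‖ ≤ J` on `[0,T]`,
then for every unit vector `ψ`,
`‖(Ũ(T) - 1)ψ‖² ≤ ‖(∫_0^T H̃) ψ‖² + 2(e^{JT} - 1 - JT - (JT)²/2)`. -/
theorem dyson_second_order_noise_bound {n : ℕ}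
    (T J : ℝ) (hT : 0 < T) (hJ : 0 ≤ J)
    (H U : ℝ → Matrix (Fin n) (Fin n) ℂ)
    (hHcont : ContinuousOn H (Set.Icc 0 T))
    (hHherm : ∀ t ∈ Set.Icc (0:ℝ) T, (H t).IsHermitian)
    (hHbound : ∀ t ∈ Set.Icc (0:ℝ) T, ‖H t‖ ≤ J)
    (hU0 : U 0 = 1)
    (hU : ∀ t ∈ Set.Icc (0:ℝ) T, HasDerivAt U ((-Complex.I) • (H t * U t)) t)
    (ψ : EuclideanSpace ℂ (Fin n)) (hψ : ‖ψ‖ = 1) :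
    ‖Matrix.toEuclideanLin (U T - 1) ψ‖^2
      ≤ ‖Matrix.toEuclideanLin (∫ t in (0:ℝ)..T, H t) ψ‖^2
        + 2 * (Real.exp (J*T) - 1 - J*T - (J*T)^2/2) := by
  set e := Matrix.toEuclideanCLM (n := Fin n) (𝕜 := ℂ)
  -- `∫₀ᵗ H` is differentiated on all of `ℝ`, so extend `H` continuously beyond `[0, T]`.
  set H' := IccExtend hT.le ((Icc 0 T).domRestrict H)
  have hH' : EqOn H' H (Icc 0 T) := fun t ht => IccExtend_of_mem hT.le _ ht
  have hA : Continuous fun t => e (H' t) :=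
    (Matrix.isometry_toEuclideanCLM (n := Fin n)).continuous.comp
      (continuous_IccExtend_iff.2 hHcont.domRestrict)
  have hu (t : ℝ) (ht : t ∈ Icc 0 T) :
      HasDerivAt (fun t => e (U t) ψ) (-I • e (H' t) (e (U t) ψ)) t := by
    rw [hH' ht]
    simpa [e, map_smul, map_mul] using Matrix.hasDerivAt_toEuclideanCLM_apply (hU t ht) ψ
  have key := norm_sub_sq_le_norm_integral_sq_add hA
    (fun t ht => by rw [hH' ht]; exact (hHherm t ht).isSelfAdjoint.map e)
    (fun t ht => by rw [hH' ht]; exact hHbound t ht) hJ hT.le hu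
  have hint : ∫ t in (0:ℝ)..T, e (H' t) ψ = e (∫ t in (0:ℝ)..T, H t) ψ := by
    rw [Matrix.toEuclideanCLM_intervalIntegral_apply (hHcont.intervalIntegrable_of_Icc hT.le)]
    exact intervalIntegral.integral_congr fun t ht => by
      rw [uIcc_of_le hT.le] at ht; rw [hH' ht]
  simp only [hU0, map_one, one_apply_eq_self, hint, hψ] at key
  rw [← Matrix.coe_toEuclideanCLM_eq_toEuclideanLin, ← Matrix.coe_toEuclideanCLM_eq_toEuclideanLin]
  simp only [ContinuousLinearMap.coe_coe, map_sub, map_one, sub_apply, one_apply_eq_self]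
  linarith [Real.cube_div_six_le_exp_sub_quadratic (mul_nonneg hJ hT.le)]
end
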